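/- arXiv:2212.02876 — 6 statements merged into one kernel-verified Lean document; each statement's English description precedes it below -/
import Mathlib

section
/- Every graph automorphism φ of the grid graph G is the composition of a translation with a rotation or reflection fixing the origin; precisely, there exist v ∈ ℤ × ℤ and a map M belonging to the eight maps {(x,y) ↦ (x,y), (x,y) ↦ (−x,y), (x,y) ↦ (x,−y), (x,y) ↦ (−x,−y), (x,y) ↦ (y,x), (x,y) ↦ (−y,x), (x,y) ↦ (y,−x), (x,y) ↦ (−y,−x)} such that φ(p) = v + M(p) for all p ∈ ℤ × ℤ. -/
/-- The grid graph: vertices are the points of `ℤ × ℤ`, two vertices adjacent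
iff their L1 (taxicab) distance is 1. -/
def gridGraph : SimpleGraph (ℤ × ℤ) where
  Adj u v := |u.1 - v.1| + |u.2 - v.2| = 1
  symm := by
    constructor
    intro u v h
    rw [abs_sub_comm v.1 u.1, abs_sub_comm v.2 u.2]
    exact h
  loopless := by
    constructor
    intro u h
    simp at h

/-- `d` is one of the four unit vectors. -/
def IsUnitVec (d : ℤ × ℤ) : Prop :=
  (d.1 = 1 ∧ d.2 = 0) ∨ (d.1 = -1 ∧ d.2 = 0) ∨ (d.1 = 0 ∧ d.2 = 1) ∨ (d.1 = 0 ∧ d.2 = -1)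

lemma const_of_steps (v : ℤ × ℤ → ℤ × ℤ)
    (h1 : ∀ p, v (p + (1, 0)) = v p) (h2 : ∀ p, v (p + (0, 1)) = v p)
    (p : ℤ × ℤ) : v p = v 0 := by
  have hx : ∀ (x : ℤ) (q : ℤ × ℤ), v (q + (x, 0)) = v q := by
    intro x
    induction x using Int.induction_on with
    | zero => intro q; show v (q + 0) = v q; rw [add_zero]
    | succ k ih =>
        intro q
        have e : q + ((k + 1 : ℤ), (0 : ℤ)) = q + ((k : ℤ), (0 : ℤ)) + (1, 0) := by
          rw [Prod.ext_iff]; constructor <;> simp <;> ring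
        rw [e, h1, ih]
    | pred k ih =>
        intro q
        have e : q + ((-k - 1 : ℤ), (0 : ℤ)) + (1, 0) = q + ((-k : ℤ), (0 : ℤ)) := by
          rw [Prod.ext_iff]; constructor <;> simp <;> ring
        calc v (q + ((-k - 1 : ℤ), (0 : ℤ)))
            = v (q + ((-k - 1 : ℤ), (0 : ℤ)) + (1, 0)) := (h1 _).symm
          _ = v (q + ((-k : ℤ), (0 : ℤ))) := by rw [e]
          _ = v q := ih q
  have hy : ∀ (y : ℤ) (q : ℤ × ℤ), v (q + (0, y)) = v q := by
    intro y
    induction y using Int.induction_on with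
    | zero => intro q; show v (q + 0) = v q; rw [add_zero]
    | succ k ih =>
        intro q
        have e : q + ((0 : ℤ), (k + 1 : ℤ)) = q + ((0 : ℤ), (k : ℤ)) + (0, 1) := by
          rw [Prod.ext_iff]; constructor <;> simp <;> ring
        rw [e, h2, ih]
    | pred k ih =>
        intro q
        have e : q + ((0 : ℤ), (-k - 1 : ℤ)) + (0, 1) = q + ((0 : ℤ), (-k : ℤ)) := by
          rw [Prod.ext_iff]; constructor <;> simp <;> ring
        calc v (q + ((0 : ℤ), (-k - 1 : ℤ)))
            = v (q + ((0 : ℤ), (-k - 1 : ℤ)) + (0, 1)) := (h2 _).symm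
          _ = v (q + ((0 : ℤ), (-k : ℤ))) := by rw [e]
          _ = v q := ih q
  have e : p = (0 : ℤ × ℤ) + ((0 : ℤ), p.2) + (p.1, (0 : ℤ)) := by
    rw [Prod.ext_iff]; constructor <;> simp <;> ring
  rw [e, hx, hy]

lemma grid_adj_iff (u v : ℤ × ℤ) : gridGraph.Adj u v ↔ IsUnitVec (u - v) := by
  show |u.1 - v.1| + |u.2 - v.2| = 1 ↔ _
  rw [Int.abs_eq_natAbs, Int.abs_eq_natAbs]
  simp only [IsUnitVec, Prod.fst_sub, Prod.snd_sub]
  omega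

lemma straight_cn_unique (u n n' e : ℤ × ℤ) (he : IsUnitVec e)
    (h1 : IsUnitVec (n - u)) (h2 : IsUnitVec (n - (u + e + e)))
    (h3 : IsUnitVec (n' - u)) (h4 : IsUnitVec (n' - (u + e + e))) : n = n' := by
  simp only [IsUnitVec, Prod.fst_sub, Prod.snd_sub, Prod.fst_add, Prod.snd_add] at he h1 h2 h3 h4
  rw [Prod.ext_iff]
  omega

lemma collinear_image (u m w : ℤ × ℤ)
    (h1 : IsUnitVec (m - u)) (h2 : IsUnitVec (w - m)) (hne : u ≠ w)
    (huniq : ∀ n n' : ℤ × ℤ, IsUnitVec (n - u) → IsUnitVec (n - w) →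
      IsUnitVec (n' - u) → IsUnitVec (n' - w) → n = n') :
    m - u = w - m := by
  by_contra hc
  simp only [ne_eq, Prod.ext_iff, not_and_or, Prod.fst_sub, Prod.snd_sub] at hne hc
  simp only [IsUnitVec, Prod.fst_sub, Prod.snd_sub] at h1 h2
  have c1 : IsUnitVec ((u.1, w.2) - u) := by
    simp only [IsUnitVec, Prod.fst_sub, Prod.snd_sub]; omega
  have c2 : IsUnitVec ((u.1, w.2) - w) := by
    simp only [IsUnitVec, Prod.fst_sub, Prod.snd_sub]; omega
  have c3 : IsUnitVec ((w.1, u.2) - u) := by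
    simp only [IsUnitVec, Prod.fst_sub, Prod.snd_sub]; omega
  have c4 : IsUnitVec ((w.1, u.2) - w) := by
    simp only [IsUnitVec, Prod.fst_sub, Prod.snd_sub]; omega
  have h := huniq _ _ c1 c2 c3 c4
  rw [Prod.ext_iff] at h
  simp only at h
  exact absurd (by omega : u.1 = w.1 ∧ u.2 = w.2) (by tauto)

lemma square_image (u A B C : ℤ × ℤ)
    (ha : IsUnitVec (A - u)) (hb : IsUnitVec (B - u))
    (hca : IsUnitVec (C - A)) (hcb : IsUnitVec (C - B))
    (hAB : A ≠ B) (hCu : C ≠ u) :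
    (A - u ≠ -(B - u)) ∧ C = A + B - u := by
  have hanb : A - u ≠ -(B - u) := by
    intro h
    have hB : B = A + (u - A) + (u - A) := by linear_combination h
    have hUe : IsUnitVec (u - A) := by
      simp only [IsUnitVec, Prod.fst_sub, Prod.snd_sub] at ha ⊢; omega
    have t2 : IsUnitVec (u - (A + (u - A) + (u - A))) := by
      rw [← hB]
      simp only [IsUnitVec, Prod.fst_sub, Prod.snd_sub] at hb ⊢; omega
    have t4 : IsUnitVec (C - (A + (u - A) + (u - A))) := by rw [← hB]; exact hcb
    exact hCu (straight_cn_unique A u C (u - A) hUe hUe t2 hca t4).symm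
  refine ⟨hanb, ?_⟩
  simp only [ne_eq, Prod.ext_iff, not_and_or] at hAB hCu
  rw [Prod.ext_iff]
  have hanb' : ¬((A - u).1 = (-(B - u)).1 ∧ (A - u).2 = (-(B - u)).2) := by
    intro hh; exact hanb (Prod.ext hh.1 hh.2)
  simp only [IsUnitVec, Prod.fst_sub, Prod.snd_sub, Prod.fst_neg, Prod.snd_neg,
    Prod.fst_add, Prod.snd_add] at ha hb hca hcb hanb' ⊢
  omega

/-- Every automorphism of the grid graph is the composition of a translation with one
of the eight rotations/reflections fixing the origin. -/
theorem gridGraph_automorphism_classification (φ : gridGraph ≃g gridGraph) :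
    ∃ (v : ℤ × ℤ) (M : ℤ × ℤ → ℤ × ℤ),
      M ∈ ({fun p => (p.1, p.2), fun p => (-p.1, p.2), fun p => (p.1, -p.2),
            fun p => (-p.1, -p.2), fun p => (p.2, p.1), fun p => (-p.2, p.1),
            fun p => (p.2, -p.1), fun p => (-p.2, -p.1)} :
              Set (ℤ × ℤ → ℤ × ℤ)) ∧
      ∀ p : ℤ × ℤ, φ p = v + M p := by
  have hfg : ∀ q : ℤ × ℤ, φ (φ.symm q) = q := fun q => φ.apply_symm_apply q
  have hgf : ∀ q : ℤ × ℤ, φ.symm (φ q) = q := fun q => φ.symm_apply_apply q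
  have hinj : ∀ p q : ℤ × ℤ, φ p = φ q → p = q := by
    intro p q h
    have := congrArg φ.symm h
    rwa [hgf, hgf] at this
  have hAdj : ∀ u v : ℤ × ℤ, IsUnitVec (φ u - φ v) ↔ IsUnitVec (u - v) := by
    intro u v
    rw [← grid_adj_iff, ← grid_adj_iff]
    exact φ.map_adj_iff
  -- uniqueness of common neighbours of images of a straight pair
  have huniq : ∀ p e : ℤ × ℤ, IsUnitVec e → ∀ n n' : ℤ × ℤ,
      IsUnitVec (n - φ p) → IsUnitVec (n - φ (p + e + e)) →
      IsUnitVec (n' - φ p) → IsUnitVec (n' - φ (p + e + e)) → n = n' := by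
    intro p e he n n' h1 h2 h3 h4
    have t1 : IsUnitVec (φ.symm n - p) := by
      have h1' : IsUnitVec (φ (φ.symm n) - φ p) := by rw [hfg]; exact h1
      exact (hAdj _ _).mp h1'
    have t2 : IsUnitVec (φ.symm n - (p + e + e)) := by
      have h2' : IsUnitVec (φ (φ.symm n) - φ (p + e + e)) := by rw [hfg]; exact h2
      exact (hAdj _ _).mp h2'
    have t3 : IsUnitVec (φ.symm n' - p) := by
      have h3' : IsUnitVec (φ (φ.symm n') - φ p) := by rw [hfg]; exact h3
      exact (hAdj _ _).mp h3'
    have t4 : IsUnitVec (φ.symm n' - (p + e + e)) := by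
      have h4' : IsUnitVec (φ (φ.symm n') - φ (p + e + e)) := by rw [hfg]; exact h4
      exact (hAdj _ _).mp h4'
    have := straight_cn_unique p (φ.symm n) (φ.symm n') e he t1 t2 t3 t4
    have := congrArg φ this
    rwa [hfg, hfg] at this
  -- the step in a fixed direction is constant along that direction
  have step1 : ∀ p e : ℤ × ℤ, IsUnitVec e →
      φ (p + e) - φ p = φ (p + e + e) - φ (p + e) := by
    intro p e he
    have h1 : IsUnitVec (φ (p + e) - φ p) := by
      rw [hAdj]
      have : p + e - p = e := by ring
      rw [this]; exact he
    have h2 : IsUnitVec (φ (p + e + e) - φ (p + e)) := by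
      rw [hAdj]
      have : p + e + e - (p + e) = e := by ring
      rw [this]; exact he
    have hne : φ p ≠ φ (p + e + e) := by
      intro h
      have := hinj _ _ h
      have h0 : e + e = 0 := by linear_combination -this
      simp only [Prod.ext_iff, Prod.fst_add, Prod.snd_add, Prod.fst_zero, Prod.snd_zero] at h0
      simp only [IsUnitVec] at he
      omega
    exact collinear_image (φ p) (φ (p + e)) (φ (p + e + e)) h1 h2 hne (huniq p e he)
  -- the square lemma
  have step2 : ∀ p : ℤ × ℤ,
      (φ (p + (1, 0)) - φ p ≠ -(φ (p + (0, 1)) - φ p)) ∧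
      φ (p + (1, 1)) = φ (p + (1, 0)) + φ (p + (0, 1)) - φ p := by
    intro p
    have hU10 : IsUnitVec ((1, 0) : ℤ × ℤ) := Or.inl ⟨rfl, rfl⟩
    have hU01 : IsUnitVec ((0, 1) : ℤ × ℤ) := Or.inr (Or.inr (Or.inl ⟨rfl, rfl⟩))
    have ha : IsUnitVec (φ (p + (1, 0)) - φ p) := by
      rw [hAdj]
      have : p + (1, 0) - p = ((1 : ℤ), (0 : ℤ)) := by ring
      rw [this]; exact hU10
    have hb : IsUnitVec (φ (p + (0, 1)) - φ p) := by
      rw [hAdj]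
      have : p + (0, 1) - p = ((0 : ℤ), (1 : ℤ)) := by ring
      rw [this]; exact hU01
    have hca : IsUnitVec (φ (p + (1, 1)) - φ (p + (1, 0))) := by
      rw [hAdj]
      have : p + (1, 1) - (p + (1, 0)) = ((0 : ℤ), (1 : ℤ)) := by
        rw [Prod.ext_iff]; constructor <;> simp
      rw [this]; exact hU01
    have hcb : IsUnitVec (φ (p + (1, 1)) - φ (p + (0, 1))) := by
      rw [hAdj]
      have : p + (1, 1) - (p + (0, 1)) = ((1 : ℤ), (0 : ℤ)) := by
        rw [Prod.ext_iff]; constructor <;> simp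
      rw [this]; exact hU10
    have hAB : φ (p + (1, 0)) ≠ φ (p + (0, 1)) := by
      intro h
      have := hinj _ _ h
      have : ((1 : ℤ), (0 : ℤ)) = ((0 : ℤ), (1 : ℤ)) := by
        have := congrArg (fun z => z - p) this
        simpa using this
      simp [Prod.ext_iff] at this
    have hCu : φ (p + (1, 1)) ≠ φ p := by
      intro h
      have := hinj _ _ h
      have : ((1 : ℤ), (1 : ℤ)) = ((0 : ℤ), (0 : ℤ)) := by
        have := congrArg (fun z => z - p) this
        simpa using this
      simp [Prod.ext_iff] at this
    have := square_image (φ p) (φ (p + (1, 0))) (φ (p + (0, 1))) (φ (p + (1, 1)))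
      ha hb hca hcb hAB hCu
    exact this
  
  have hU10 : IsUnitVec ((1, 0) : ℤ × ℤ) := Or.inl ⟨rfl, rfl⟩
  have hU01 : IsUnitVec ((0, 1) : ℤ × ℤ) := Or.inr (Or.inr (Or.inl ⟨rfl, rfl⟩))
  obtain ⟨A, hA⟩ : ∃ A : ℤ × ℤ, A = φ ((0 : ℤ × ℤ) + (1, 0)) - φ 0 := ⟨_, rfl⟩
  obtain ⟨B, hB⟩ : ∃ B : ℤ × ℤ, B = φ ((0 : ℤ × ℤ) + (0, 1)) - φ 0 := ⟨_, rfl⟩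
  -- the horizontal step is the constant A
  have hconstA : ∀ p : ℤ × ℤ, φ (p + (1, 0)) - φ p = A := by
    intro p
    rw [hA]
    exact const_of_steps (fun q => φ (q + (1, 0)) - φ q)
      (fun q => (step1 q (1, 0) hU10).symm)
      (fun q => by
        have e : q + (0, 1) + (1, 0) = q + (1, 1) := by
          rw [Prod.ext_iff]; constructor <;> simp
        show φ (q + (0, 1) + (1, 0)) - φ (q + (0, 1)) = φ (q + (1, 0)) - φ q
        rw [e]
        linear_combination (step2 q).2) p
  have hconstB : ∀ p : ℤ × ℤ, φ (p + (0, 1)) - φ p = B := by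
    intro p
    rw [hB]
    exact const_of_steps (fun q => φ (q + (0, 1)) - φ q)
      (fun q => by
        have e : q + (1, 0) + (0, 1) = q + (1, 1) := by
          rw [Prod.ext_iff]; constructor <;> simp
        show φ (q + (1, 0) + (0, 1)) - φ (q + (1, 0)) = φ (q + (0, 1)) - φ q
        rw [e]
        linear_combination (step2 q).2)
      (fun q => (step1 q (0, 1) hU01).symm) p
  have stepA : ∀ p : ℤ × ℤ, φ (p + (1, 0)) = φ p + A := by
    intro p; linear_combination hconstA p
  have stepB : ∀ p : ℤ × ℤ, φ (p + (0, 1)) = φ p + B := by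
    intro p; linear_combination hconstB p
  -- the explicit formula
  have hrow : ∀ x : ℤ, φ ((x, 0) : ℤ × ℤ) = φ 0 + x • A := by
    intro x
    induction x using Int.induction_on with
    | zero =>
        have e : (((0 : ℤ), (0 : ℤ)) : ℤ × ℤ) = 0 := rfl
        rw [e]; simp
    | succ k ih =>
        have e : (((k + 1 : ℤ), (0 : ℤ)) : ℤ × ℤ) = ((k : ℤ), (0 : ℤ)) + (1, 0) := by
          rw [Prod.ext_iff]; constructor <;> simp
        rw [e, stepA, ih, add_smul, one_smul, add_assoc]
    | pred k ih =>
        have e : (((-k : ℤ), (0 : ℤ)) : ℤ × ℤ) = ((-k - 1 : ℤ), (0 : ℤ)) + (1, 0) := by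
          rw [Prod.ext_iff]; constructor <;> simp
        have h := stepA (((-k - 1 : ℤ), (0 : ℤ)) : ℤ × ℤ)
        rw [← e, ih] at h
        rw [eq_sub_of_add_eq h.symm]
        have : (-(k : ℤ) - 1) • A = -(k : ℤ) • A - A := by
          rw [sub_smul, one_smul]
        rw [this, add_sub_assoc]
  have hform : ∀ x y : ℤ, φ ((x, y) : ℤ × ℤ) = φ 0 + (x • A + y • B) := by
    intro x y
    induction y using Int.induction_on with
    | zero => rw [hrow]; simp
    | succ k ih =>
        have e : (((x : ℤ), (k + 1 : ℤ)) : ℤ × ℤ) = ((x : ℤ), (k : ℤ)) + (0, 1) := by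
          rw [Prod.ext_iff]; constructor <;> simp
        rw [e, stepB, ih, add_smul, one_smul]
        abel
    | pred k ih =>
        have e : (((x : ℤ), (-k : ℤ)) : ℤ × ℤ) = ((x : ℤ), (-k - 1 : ℤ)) + (0, 1) := by
          rw [Prod.ext_iff]; constructor <;> simp
        have h := stepB (((x : ℤ), (-k - 1 : ℤ)) : ℤ × ℤ)
        rw [← e, ih] at h
        rw [eq_sub_of_add_eq h.symm, sub_smul, one_smul]
        abel
  -- properties of A and B
  have hUA : IsUnitVec A := by
    rw [hA]
    have h := (hAdj ((0 : ℤ × ℤ) + (1, 0)) 0).mpr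
    have e : (0 : ℤ × ℤ) + (1, 0) - 0 = ((1 : ℤ), (0 : ℤ)) := by ring
    rw [e] at h
    exact h hU10
  have hUB : IsUnitVec B := by
    rw [hB]
    have h := (hAdj ((0 : ℤ × ℤ) + (0, 1)) 0).mpr
    have e : (0 : ℤ × ℤ) + (0, 1) - 0 = ((0 : ℤ), (1 : ℤ)) := by ring
    rw [e] at h
    exact h hU01
  have hABne : A ≠ B := by
    intro h
    have h2 : φ ((0 : ℤ × ℤ) + (1, 0)) = φ ((0 : ℤ × ℤ) + (0, 1)) := by
      have := hA.symm.trans (h.trans hB)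
      linear_combination this
    have := hinj _ _ h2
    simp [Prod.ext_iff] at this
  have hAnB : A ≠ -B := by
    rw [hA, hB]
    exact (step2 0).1
  have hA4 : A = ((1 : ℤ), (0 : ℤ)) ∨ A = (-1, 0) ∨ A = (0, 1) ∨ A = (0, -1) := by
    rcases hUA with ⟨h1, h2⟩ | ⟨h1, h2⟩ | ⟨h1, h2⟩ | ⟨h1, h2⟩
    · exact Or.inl (Prod.ext h1 h2)
    · exact Or.inr (Or.inl (Prod.ext h1 h2))
    · exact Or.inr (Or.inr (Or.inl (Prod.ext h1 h2)))
    · exact Or.inr (Or.inr (Or.inr (Prod.ext h1 h2)))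
  have hB4 : B = ((1 : ℤ), (0 : ℤ)) ∨ B = (-1, 0) ∨ B = (0, 1) ∨ B = (0, -1) := by
    rcases hUB with ⟨h1, h2⟩ | ⟨h1, h2⟩ | ⟨h1, h2⟩ | ⟨h1, h2⟩
    · exact Or.inl (Prod.ext h1 h2)
    · exact Or.inr (Or.inl (Prod.ext h1 h2))
    · exact Or.inr (Or.inr (Or.inl (Prod.ext h1 h2)))
    · exact Or.inr (Or.inr (Or.inr (Prod.ext h1 h2)))
  clear hA hB hconstA hconstB stepA stepB hrow step1 step2 huniq hAdj hinj hfg hgf hUA hUB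
  rcases hA4 with rfl | rfl | rfl | rfl <;> rcases hB4 with rfl | rfl | rfl | rfl <;>
    first
      | (exact absurd rfl hABne)
      | (exact absurd (by decide) hAnB)
      | skip
  · exact ⟨φ 0, fun p => (p.1, p.2), by simp [Set.mem_insert_iff],
      fun p => by simpa using hform p.1 p.2⟩
  · exact ⟨φ 0, fun p => (p.1, -p.2), by simp [Set.mem_insert_iff],
      fun p => by simpa using hform p.1 p.2⟩
  · exact ⟨φ 0, fun p => (-p.1, p.2), by simp [Set.mem_insert_iff],
      fun p => by simpa using hform p.1 p.2⟩
  · exact ⟨φ 0, fun p => (-p.1, -p.2), by simp [Set.mem_insert_iff],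
      fun p => by simpa using hform p.1 p.2⟩
  · exact ⟨φ 0, fun p => (p.2, p.1), by simp [Set.mem_insert_iff],
      fun p => by simpa using hform p.1 p.2⟩
  · exact ⟨φ 0, fun p => (-p.2, p.1), by simp [Set.mem_insert_iff],
      fun p => by simpa using hform p.1 p.2⟩
  · exact ⟨φ 0, fun p => (p.2, -p.1), by simp [Set.mem_insert_iff],
      fun p => by simpa using hform p.1 p.2⟩
  · exact ⟨φ 0, fun p => (-p.2, -p.1), by simp [Set.mem_insert_iff],
      fun p => by simpa using hform p.1 p.2⟩
end

section
/- Let n > m > 1 and S ⊆ R. The four corner strings λ_AB(S), λ_BA(S), λ_DC(S), λ_CD(S) are pairwise distinct if and only if S is invariant under none of the three maps σ_v, σ_h, ρ (i.e., for each of these maps g there exists (x,y) ∈ R with ((x,y) ∈ S) ↮ (g(x,y) ∈ S)). In particular, if S has no nontrivial rectangle symmetry, then exactly one of the four corner strings is lexicographically greatest. -/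
/-- The rectangle `R = {0,…,n−1} × {0,…,m−1}` as a finite set of grid nodes. -/
noncomputable def Rset (n m : ℕ) : Finset (ℤ × ℤ) :=
  Finset.Icc (0 : ℤ) ((n : ℤ) - 1) ×ˢ Finset.Icc (0 : ℤ) ((m : ℤ) - 1)

/-- The corner string `λ_AB`: scan rows bottom-to-top, each row left-to-right. -/
def lamAB (n m : ℕ) (S : Finset (ℤ × ℤ)) : Fin (m * n) → Bool :=
  fun i => decide ((((i : ℕ) % n : ℤ), ((i : ℕ) / n : ℤ)) ∈ S)

/-- The corner string `λ_BA`. -/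
def lamBA (n m : ℕ) (S : Finset (ℤ × ℤ)) : Fin (m * n) → Bool :=
  fun i => decide ((((n - 1 - (i : ℕ) % n : ℕ) : ℤ), ((i : ℕ) / n : ℤ)) ∈ S)

/-- The corner string `λ_DC`. -/
def lamDC (n m : ℕ) (S : Finset (ℤ × ℤ)) : Fin (m * n) → Bool :=
  fun i => decide ((((i : ℕ) % n : ℤ), ((m - 1 - (i : ℕ) / n : ℕ) : ℤ)) ∈ S)

/-- The corner string `λ_CD`. -/
def lamCD (n m : ℕ) (S : Finset (ℤ × ℤ)) : Fin (m * n) → Bool :=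
  fun i => decide ((((n - 1 - (i : ℕ) % n : ℕ) : ℤ), ((m - 1 - (i : ℕ) / n : ℕ) : ℤ)) ∈ S)

/-- Vertical-axis reflection of the rectangle. -/
def sigmaV (n : ℕ) (p : ℤ × ℤ) : ℤ × ℤ := ((n : ℤ) - 1 - p.1, p.2)

/-- Horizontal-axis reflection of the rectangle. -/
def sigmaH (m : ℕ) (p : ℤ × ℤ) : ℤ × ℤ := (p.1, (m : ℤ) - 1 - p.2)

/-- 180° rotation of the rectangle. -/
def rho (n m : ℕ) (p : ℤ × ℤ) : ℤ × ℤ := ((n : ℤ) - 1 - p.1, (m : ℤ) - 1 - p.2)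

namespace CornerStringsAux

/-- Membership predicate in natural-number coordinates. -/
def M (S : Finset (ℤ × ℤ)) (x y : ℕ) : Prop := ((x : ℤ), (y : ℤ)) ∈ S

/-- Invariance under the vertical reflection, in ℕ coordinates. -/
def Iv (n m : ℕ) (S : Finset (ℤ × ℤ)) : Prop :=
  ∀ x y : ℕ, x < n → y < m → (M S x y ↔ M S (n - 1 - x) y)

/-- Invariance under the horizontal reflection, in ℕ coordinates. -/
def Ih (n m : ℕ) (S : Finset (ℤ × ℤ)) : Prop :=
  ∀ x y : ℕ, x < n → y < m → (M S x y ↔ M S x (m - 1 - y))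

/-- Invariance under the half-turn, in ℕ coordinates. -/
def Ir (n m : ℕ) (S : Finset (ℤ × ℤ)) : Prop :=
  ∀ x y : ℕ, x < n → y < m → (M S x y ↔ M S (n - 1 - x) (m - 1 - y))

/-- Scanning the grid in reading order covers exactly the pairs `(x, y)` with
`x < n`, `y < m`. -/
lemma grid_iff {n m : ℕ} (hn : 0 < n) (P : ℕ → ℕ → Prop) :
    (∀ i : Fin (m * n), P ((i : ℕ) % n) ((i : ℕ) / n)) ↔
    ∀ x y : ℕ, x < n → y < m → P x y := by
  constructor
  · intro h x y hx hy
    have hi : y * n + x < m * n := by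
      have h1 : y * n + x < (y + 1) * n := by
        rw [Nat.succ_mul]; omega
      have h2 : (y + 1) * n ≤ m * n := Nat.mul_le_mul_right n hy
      omega
    have e1 : (y * n + x) % n = x := by
      rw [add_comm, Nat.add_mul_mod_self_right, Nat.mod_eq_of_lt hx]
    have e2 : (y * n + x) / n = y := by
      rw [mul_comm, Nat.mul_add_div hn, Nat.div_eq_of_lt hx, add_zero]
    have := h ⟨y * n + x, hi⟩
    simpa [e1, e2] using this
  · intro h i
    exact h _ _ (Nat.mod_lt _ hn) ((Nat.div_lt_iff_lt_mul hn).2 i.isLt)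

/-- Membership in the rectangle, in natural-number coordinates. -/
lemma mem_Rset {n m : ℕ} (p : ℤ × ℤ) :
    p ∈ Rset n m ↔ ∃ x y : ℕ, x < n ∧ y < m ∧ p = ((x : ℤ), (y : ℤ)) := by
  simp only [Rset, Finset.mem_product, Finset.mem_Icc]
  constructor
  · rintro ⟨⟨h1, h2⟩, h3, h4⟩
    refine ⟨p.1.toNat, p.2.toNat, by omega, by omega, ?_⟩
    ext <;> simp <;> omega
  · rintro ⟨x, y, hx, hy, rfl⟩
    constructor <;> constructor <;> simp <;> omega

lemma flip_x {n m : ℕ} (A B : ℕ → ℕ → Prop) :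
    (∀ x y : ℕ, x < n → y < m → (A (n - 1 - x) y ↔ B x y)) ↔
    (∀ x y : ℕ, x < n → y < m → (A x y ↔ B (n - 1 - x) y)) := by
  constructor <;> intro h x y hx hy <;>
  · have := h (n - 1 - x) y (by omega) hy
    rwa [show n - 1 - (n - 1 - x) = x by omega] at this
lemma flip_x_both {n m : ℕ} (A B : ℕ → ℕ → Prop) :
    (∀ x y : ℕ, x < n → y < m → (A (n - 1 - x) y ↔ B (n - 1 - x) y)) ↔
    (∀ x y : ℕ, x < n → y < m → (A x y ↔ B x y)) := by
  constructor <;> intro h x y hx hy <;>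
  · have := h (n - 1 - x) y (by omega) hy
    first
      | rwa [show n - 1 - (n - 1 - x) = x by omega] at this
      | exact this
lemma flip_y_both {n m : ℕ} (A B : ℕ → ℕ → Prop) :
    (∀ x y : ℕ, x < n → y < m → (A x (m - 1 - y) ↔ B x (m - 1 - y))) ↔
    (∀ x y : ℕ, x < n → y < m → (A x y ↔ B x y)) := by
  constructor <;> intro h x y hx hy <;>
  · have := h x (m - 1 - y) hx (by omega)
    first
      | rwa [show m - 1 - (m - 1 - y) = y by omega] at this
      | exact this

section eqs
variable {n m : ℕ} (S : Finset (ℤ × ℤ)) (hn : 0 < n)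
include hn

lemma eq_AB_BA : lamAB n m S = lamBA n m S ↔ Iv n m S := by
  rw [funext_iff]
  simp only [lamAB, lamBA, decide_eq_decide, ← Int.natCast_mod, ← Int.natCast_div]
  exact grid_iff (m := m) hn (fun x y => (M S x y ↔ M S (n - 1 - x) y))

lemma eq_AB_DC : lamAB n m S = lamDC n m S ↔ Ih n m S := by
  rw [funext_iff]
  simp only [lamAB, lamDC, decide_eq_decide, ← Int.natCast_mod, ← Int.natCast_div]
  exact grid_iff (m := m) hn (fun x y => (M S x y ↔ M S x (m - 1 - y)))

lemma eq_AB_CD : lamAB n m S = lamCD n m S ↔ Ir n m S := by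
  rw [funext_iff]
  simp only [lamAB, lamCD, decide_eq_decide, ← Int.natCast_mod, ← Int.natCast_div]
  exact grid_iff (m := m) hn (fun x y => (M S x y ↔ M S (n - 1 - x) (m - 1 - y)))

lemma eq_BA_DC : lamBA n m S = lamDC n m S ↔ Ir n m S := by
  rw [funext_iff]
  simp only [lamBA, lamDC, decide_eq_decide, ← Int.natCast_mod, ← Int.natCast_div]
  exact (grid_iff (m := m) hn
    (fun x y => (M S (n - 1 - x) y ↔ M S x (m - 1 - y)))).trans
    (flip_x (fun x y => M S x y) (fun x y => M S x (m - 1 - y)))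

lemma eq_BA_CD : lamBA n m S = lamCD n m S ↔ Ih n m S := by
  rw [funext_iff]
  simp only [lamBA, lamCD, decide_eq_decide, ← Int.natCast_mod, ← Int.natCast_div]
  exact (grid_iff (m := m) hn
    (fun x y => (M S (n - 1 - x) y ↔ M S (n - 1 - x) (m - 1 - y)))).trans
    (flip_x_both (fun x y => M S x y) (fun x y => M S x (m - 1 - y)))

lemma eq_DC_CD : lamDC n m S = lamCD n m S ↔ Iv n m S := by
  rw [funext_iff]
  simp only [lamDC, lamCD, decide_eq_decide, ← Int.natCast_mod, ← Int.natCast_div]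
  exact (grid_iff (m := m) hn
    (fun x y => (M S x (m - 1 - y) ↔ M S (n - 1 - x) (m - 1 - y)))).trans
    (flip_y_both (fun x y => M S x y) (fun x y => M S (n - 1 - x) y))

lemma inv_V : (∀ p ∈ Rset n m, (p ∈ S ↔ sigmaV n p ∈ S)) ↔ Iv n m S := by
  constructor
  · intro h x y hx hy
    have := h ((x : ℤ), (y : ℤ)) (mem_Rset _ |>.2 ⟨x, y, hx, hy, rfl⟩)
    simpa [sigmaV, M, show (n : ℤ) - 1 - (x : ℤ) = ((n - 1 - x : ℕ) : ℤ) by omega]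
      using this
  · intro h p hp
    obtain ⟨x, y, hx, hy, rfl⟩ := mem_Rset _ |>.1 hp
    have := h x y hx hy
    simpa [sigmaV, M, show (n : ℤ) - 1 - (x : ℤ) = ((n - 1 - x : ℕ) : ℤ) by omega]
      using this
end eqs

section eqs2
variable {n m : ℕ} (S : Finset (ℤ × ℤ)) (hm0 : 0 < m)
include hm0

lemma inv_H : (∀ p ∈ Rset n m, (p ∈ S ↔ sigmaH m p ∈ S)) ↔ Ih n m S := by
  constructor
  · intro h x y hx hy
    have := h ((x : ℤ), (y : ℤ)) (mem_Rset _ |>.2 ⟨x, y, hx, hy, rfl⟩)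
    simpa [sigmaH, M, show (m : ℤ) - 1 - (y : ℤ) = ((m - 1 - y : ℕ) : ℤ) by omega]
      using this
  · intro h p hp
    obtain ⟨x, y, hx, hy, rfl⟩ := mem_Rset _ |>.1 hp
    have := h x y hx hy
    simpa [sigmaH, M, show (m : ℤ) - 1 - (y : ℤ) = ((m - 1 - y : ℕ) : ℤ) by omega]
      using this

lemma inv_R : (∀ p ∈ Rset n m, (p ∈ S ↔ rho n m p ∈ S)) ↔ Ir n m S := by
  constructor
  · intro h x y hx hy
    have := h ((x : ℤ), (y : ℤ)) (mem_Rset _ |>.2 ⟨x, y, hx, hy, rfl⟩)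
    simpa [rho, M, show (n : ℤ) - 1 - (x : ℤ) = ((n - 1 - x : ℕ) : ℤ) by omega,
      show (m : ℤ) - 1 - (y : ℤ) = ((m - 1 - y : ℕ) : ℤ) by omega] using this
  · intro h p hp
    obtain ⟨x, y, hx, hy, rfl⟩ := mem_Rset _ |>.1 hp
    have := h x y hx hy
    simpa [rho, M, show (n : ℤ) - 1 - (x : ℤ) = ((n - 1 - x : ℕ) : ℤ) by omega,
      show (m : ℤ) - 1 - (y : ℤ) = ((m - 1 - y : ℕ) : ℤ) by omega] using this
end eqs2

lemma exists_counterexample_iff {n m : ℕ} (S : Finset (ℤ × ℤ)) (g : ℤ × ℤ → ℤ × ℤ) :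
    (∃ p ∈ Rset n m, ¬ (p ∈ S ↔ g p ∈ S)) ↔
    ¬ (∀ p ∈ Rset n m, (p ∈ S ↔ g p ∈ S)) := by
  constructor
  · rintro ⟨p, hp, h⟩ H
    exact h (H p hp)
  · intro H
    push_neg at H
    obtain ⟨p, hp, h⟩ := H
    exact ⟨p, hp, by tauto⟩

/-- A nonempty list has an element maximizing a "totally comparable" valuation. -/
lemma exists_max_of_ne_nil {α β : Type*} [Preorder β] (t : α → β)
    (htot : ∀ a b : α, t a ≤ t b ∨ t b ≤ t a) :
    ∀ l : List α, l ≠ [] → ∃ f ∈ l, ∀ g ∈ l, t g ≤ t f := by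
  intro l
  induction l with
  | nil => simp
  | cons a l ih =>
    intro _
    rcases eq_or_ne l [] with rfl | hl
    · exact ⟨a, by simp⟩
    · obtain ⟨f, hf, hmax⟩ := ih hl
      rcases htot a f with h | h
      · refine ⟨f, List.mem_cons_of_mem _ hf, ?_⟩
        intro g hg
        rcases List.mem_cons.1 hg with rfl | hg
        · exact h
        · exact hmax g hg
      · refine ⟨a, List.mem_cons_self, ?_⟩
        intro g hg
        rcases List.mem_cons.1 hg with rfl | hg
        · exact le_refl _
        · exact (hmax g hg).trans h

/-- The lexicographic order on binary strings is total. -/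
lemma lex_le_total (N : ℕ) (a b : Lex (Fin N → Bool)) : a ≤ b ∨ b ≤ a := by
  have tri : IsTrichotomous (Lex (Fin N → Bool)) (· < ·) :=
    ⟨(Pi.isTrichotomous_lex (· < ·) (fun {_} => (· < ·))
      (IsWellFounded.wf : WellFounded ((· < ·) : Fin N → Fin N → Prop))).trichotomous⟩
  by_cases h1 : a < b
  · exact Or.inl h1.le
  by_cases h2 : b < a
  · exact Or.inr h2.le
  exact Or.inl (tri.trichotomous a b h1 h2).le

/-- Among the four corner strings there is a unique lexicographic maximum
(of course, possibly attained by several of the list entries when they coincide —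
uniqueness is as a function). -/
lemma unique_max (n m : ℕ) (S : Finset (ℤ × ℤ)) :
    ∃! f : Fin (m * n) → Bool,
      f ∈ [lamAB n m S, lamBA n m S, lamDC n m S, lamCD n m S] ∧
      ∀ g' ∈ [lamAB n m S, lamBA n m S, lamDC n m S, lamCD n m S],
        toLex g' ≤ toLex f := by
  obtain ⟨f, hf, hmax⟩ := exists_max_of_ne_nil
    (toLex : (Fin (m * n) → Bool) → Lex (Fin (m * n) → Bool))
    (fun a b => lex_le_total (m * n) (toLex a) (toLex b))
    [lamAB n m S, lamBA n m S, lamDC n m S, lamCD n m S] (by simp)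
  refine ⟨f, ⟨hf, hmax⟩, ?_⟩
  rintro f' ⟨hf', hmax'⟩
  exact toLex.injective (le_antisymm (hmax f' hf') (hmax' f hf))

end CornerStringsAux

open CornerStringsAux in
set_option maxHeartbeats 1000000 in
/-- For a non-square rectangle, the four corner strings are pairwise distinct iff the
configuration is invariant under none of the three nontrivial rectangle symmetries;
in particular, in that case exactly one of the four strings is lexicographically
greatest. -/
theorem corner_strings_pairwise_distinct_iff_asymmetric (n m : ℕ) (hm : 1 < m)
    (hmn : m < n) (S : Finset (ℤ × ℤ)) (hS : S ⊆ Rset n m) :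
    (([lamAB n m S, lamBA n m S, lamDC n m S, lamCD n m S].Pairwise (· ≠ ·)) ↔
      ∀ g ∈ ({sigmaV n, sigmaH m, rho n m} : Set (ℤ × ℤ → ℤ × ℤ)),
        ∃ p ∈ Rset n m, ¬ (p ∈ S ↔ g p ∈ S)) ∧
    ((∀ g ∈ ({sigmaV n, sigmaH m, rho n m} : Set (ℤ × ℤ → ℤ × ℤ)),
        ∃ p ∈ Rset n m, ¬ (p ∈ S ↔ g p ∈ S)) →
      ∃! f : Fin (m * n) → Bool,
        f ∈ [lamAB n m S, lamBA n m S, lamDC n m S, lamCD n m S] ∧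
        ∀ g' ∈ [lamAB n m S, lamBA n m S, lamDC n m S, lamCD n m S],
          toLex g' ≤ toLex f) := by
  have hn : 0 < n := by omega
  have hm0 : 0 < m := by omega
  refine ⟨?_, fun _ => unique_max n m S⟩
  constructor
  · intro hpw g hg
    obtain ⟨ha, -⟩ := List.pairwise_cons.1 hpw
    have d1 : ¬ Iv n m S := fun H => ha _ (by simp) ((eq_AB_BA S hn).2 H)
    have d2 : ¬ Ih n m S := fun H => ha _ (by simp) ((eq_AB_DC S hn).2 H)
    have d3 : ¬ Ir n m S := fun H => ha _ (by simp) ((eq_AB_CD S hn).2 H)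
    simp only [Set.mem_insert_iff, Set.mem_singleton_iff] at hg
    rcases hg with rfl | rfl | rfl
    · exact (exists_counterexample_iff S _).2 fun H => d1 ((inv_V S hn).1 H)
    · exact (exists_counterexample_iff S _).2 fun H => d2 ((inv_H S hm0).1 H)
    · exact (exists_counterexample_iff S _).2 fun H => d3 ((inv_R S hm0).1 H)
  · intro h
    have nIv : ¬ Iv n m S := fun H =>
      (exists_counterexample_iff S _).1 (h (sigmaV n) (by simp)) ((inv_V S hn).2 H)
    have nIh : ¬ Ih n m S := fun H =>
      (exists_counterexample_iff S _).1 (h (sigmaH m) (by simp)) ((inv_H S hm0).2 H)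
    have nIr : ¬ Ir n m S := fun H =>
      (exists_counterexample_iff S _).1 (h (rho n m) (by simp)) ((inv_R S hm0).2 H)
    refine List.Pairwise.cons ?_ (List.Pairwise.cons ?_
      (List.Pairwise.cons ?_ (List.Pairwise.cons ?_ List.Pairwise.nil)))
    · intro x hx
      simp only [List.mem_cons, List.not_mem_nil, or_false] at hx
      rcases hx with rfl | rfl | rfl
      · exact fun He => nIv ((eq_AB_BA S hn).1 He)
      · exact fun He => nIh ((eq_AB_DC S hn).1 He)
      · exact fun He => nIr ((eq_AB_CD S hn).1 He)
    · intro x hx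
      simp only [List.mem_cons, List.not_mem_nil, or_false] at hx
      rcases hx with rfl | rfl
      · exact fun He => nIr ((eq_BA_DC S hn).1 He)
      · exact fun He => nIh ((eq_BA_CD S hn).1 He)
    · intro x hx
      simp only [List.mem_cons, List.not_mem_nil, or_false] at hx
      rcases hx with rfl
      exact fun He => nIv ((eq_DC_CD S hn).1 He)
    · intro x hx
      simp at hx
end

section
/- Let n > m > 1 and let S ⊆ R be nonempty. Suppose λ_AB(S) is strictly greater in lexicographic order than each of λ_BA(S), λ_DC(S) and λ_CD(S). Let h = (x,y) be the element of S with the minimal AB-scan index (the head robot), suppose x ≥ 1, and let S' = (S \ {h}) ∪ {(x−1, y)} (the head moves one step left). Then λ_AB(S') is strictly greater in lexicographic order than each of λ_BA(S'), λ_DC(S') and λ_CD(S'). (Hence moving the head one step towards the leading corner keeps the configuration asymmetric with the same leading corner.) -/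
section AuxLemmas

private lemma lexlt_iff {N : ℕ} {f g : Fin N → Bool} :
    toLex f < toLex g ↔ ∃ i, (∀ j, j < i → f j = g j) ∧ f i < g i := Iff.rfl

private lemma lexlt_of_witness {N : ℕ} {f g : Fin N → Bool} (i₀ : Fin N)
    (hg : g i₀ = true) (hf : ∀ j : Fin N, j ≤ i₀ → f j = false) :
    toLex f < toLex g := by
  classical
  obtain ⟨i, hi_mem, hi_min⟩ :=
    Finset.exists_min_image (Finset.univ.filter fun i : Fin N => g i = true) id
      ⟨i₀, by simp [hg]⟩
  have hgi : g i = true := by simpa using hi_mem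
  have hii₀ : i ≤ i₀ := by simpa using hi_min i₀ (by simp [hg])
  rw [lexlt_iff]
  refine ⟨i, fun j hj => ?_, ?_⟩
  · have hgj : g j = false := by
      rcases Bool.eq_false_or_eq_true (g j) with h | h
      · exact absurd (by simpa using hi_min j (by simp [h])) (not_le.mpr hj)
      · exact h
    rw [hf j (le_of_lt (lt_of_lt_of_le hj hii₀)), hgj]
  · rw [hf i hii₀, hgi]
    exact Bool.false_lt_true

private lemma false_below {N : ℕ} {f g : Fin N → Bool} (h : toLex f < toLex g) {k : ℕ}
    (hg : ∀ i : Fin N, (i : ℕ) < k → g i = false) :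
    ∀ i : Fin N, (i : ℕ) < k → f i = false := by
  intro i hi
  rcases Bool.eq_false_or_eq_true (f i) with hfi | hfi
  · exfalso
    refine lt_asymm h (lexlt_of_witness i hfi (fun j hj => hg j ?_))
    exact lt_of_le_of_lt (show (j : ℕ) ≤ (i : ℕ) from hj) hi
  · exact hfi


private lemma idx_mod {n : ℕ} (d : ℕ) {c : ℕ} (hc : c < n) : (d * n + c) % n = c := by
  rw [Nat.add_mod, Nat.mul_mod_left, Nat.zero_add, Nat.mod_mod_of_dvd,
    Nat.mod_eq_of_lt hc]
  exact dvd_refl n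

private lemma idx_div {n : ℕ} (d : ℕ) {c : ℕ} (hc : c < n) : (d * n + c) / n = d := by
  have h0 : 0 < n := lt_of_le_of_lt (Nat.zero_le c) hc
  rw [Nat.add_comm, Nat.add_mul_div_right _ _ h0, Nat.div_eq_of_lt hc, Nat.zero_add]

end AuxLemmas

/-- If the configuration is asymmetric with `λ_AB` the strictly lexicographically
largest corner string, then moving the head (the robot with the minimal AB-scan
index) one step left keeps `λ_AB` strictly lexicographically largest. -/
theorem head_move_left_preserves_asymmetry (n m : ℕ) (hm : 1 < m) (hmn : m < n)
    (S : Finset (ℤ × ℤ)) (hS : S ⊆ Rset n m) (hne : S.Nonempty)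
    (hBA : toLex (lamBA n m S) < toLex (lamAB n m S))
    (hDC : toLex (lamDC n m S) < toLex (lamAB n m S))
    (hCD : toLex (lamCD n m S) < toLex (lamAB n m S))
    (x y : ℤ) (hhead : (x, y) ∈ S)
    (hmin : ∀ p ∈ S, y * n + x ≤ p.2 * n + p.1)
    (hx : 1 ≤ x)
    (S' : Finset (ℤ × ℤ)) (hS' : S' = (S.erase (x, y)) ∪ {(x - 1, y)}) :
    toLex (lamBA n m S') < toLex (lamAB n m S') ∧
    toLex (lamDC n m S') < toLex (lamAB n m S') ∧
    toLex (lamCD n m S') < toLex (lamAB n m S') := by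
  have hn0 : 0 < n := by omega
  have hR := hS hhead
  simp only [Rset, Finset.mem_product, Finset.mem_Icc] at hR
  obtain ⟨⟨hx0, hx1⟩, hy0, hy1⟩ := hR
  obtain ⟨a, rfl⟩ := Int.eq_ofNat_of_zero_le hx0
  obtain ⟨b, rfl⟩ := Int.eq_ofNat_of_zero_le hy0
  have ha1 : 1 ≤ a := by exact_mod_cast hx
  have han : a < n := by omega
  have hbm : b < m := by omega
  obtain ⟨k, hk⟩ : ∃ k, k = b * n + a := ⟨_, rfl⟩
  have hkN : k < m * n := by
    have h1 : (b + 1) * n ≤ m * n := Nat.mul_le_mul_right n (by omega)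
    have h2 : (b + 1) * n = b * n + n := by ring
    omega
  have hk1N : k - 1 < m * n := by omega
  have hmem : ∀ q : ℤ × ℤ,
      q ∈ S' ↔ (q ∈ S ∧ q ≠ ((a : ℤ), (b : ℤ))) ∨ q = ((a : ℤ) - 1, (b : ℤ)) := by
    intro q
    subst hS'
    simp only [Finset.mem_union, Finset.mem_erase, Finset.mem_singleton]
    tauto
  have hABlow : ∀ i : Fin (m * n), (i : ℕ) < k → lamAB n m S i = false := by
    intro i hi
    simp only [lamAB, decide_eq_false_iff_not]
    intro hq
    have h1 : ((b : ℤ)) * n + a ≤ (((i : ℕ) / n : ℕ) : ℤ) * n + (((i : ℕ) % n : ℕ) : ℤ) :=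
      hmin _ hq
    have h2 : b * n + a ≤ ((i : ℕ) / n) * n + (i : ℕ) % n := by exact_mod_cast h1
    have h3 := Nat.div_add_mod (i : ℕ) n
    have h4 : n * ((i : ℕ) / n) = ((i : ℕ) / n) * n := Nat.mul_comm _ _
    omega
  have hBAlowS := false_below hBA hABlow
  have hDClowS := false_below hDC hABlow
  have hCDlowS := false_below hCD hABlow
  have hBAh : k ≤ b * n + (n - 1 - a) := by
    by_contra hlt
    push_neg at hlt
    have hj : b * n + (n - 1 - a) < m * n := by omega
    have hfalse := hBAlowS ⟨_, hj⟩ hlt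
    rw [show lamBA n m S ⟨b * n + (n - 1 - a), hj⟩
        = decide ((((n - 1 - (b * n + (n - 1 - a)) % n : ℕ) : ℤ), (((b * n + (n - 1 - a)) / n : ℕ) : ℤ)) ∈ S) from rfl,
      idx_mod _ (by omega), idx_div _ (by omega),
      show n - 1 - (n - 1 - a) = a from by omega] at hfalse
    simp only [decide_eq_false_iff_not] at hfalse
    exact hfalse hhead
  have hDCh : k ≤ (m - 1 - b) * n + a := by
    by_contra hlt
    push_neg at hlt
    have hj : (m - 1 - b) * n + a < m * n := by omega
    have hfalse := hDClowS ⟨_, hj⟩ hlt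
    rw [show lamDC n m S ⟨(m - 1 - b) * n + a, hj⟩
        = decide ((((((m - 1 - b) * n + a) % n : ℕ) : ℤ), ((m - 1 - ((m - 1 - b) * n + a) / n : ℕ) : ℤ)) ∈ S) from rfl,
      idx_mod _ (by omega), idx_div _ (by omega),
      show m - 1 - (m - 1 - b) = b from by omega] at hfalse
    simp only [decide_eq_false_iff_not] at hfalse
    exact hfalse hhead
  have hCDh : k ≤ (m - 1 - b) * n + (n - 1 - a) := by
    by_contra hlt
    push_neg at hlt
    have hj : (m - 1 - b) * n + (n - 1 - a) < m * n := by omega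
    have hfalse := hCDlowS ⟨_, hj⟩ hlt
    rw [show lamCD n m S ⟨(m - 1 - b) * n + (n - 1 - a), hj⟩
        = decide ((((n - 1 - ((m - 1 - b) * n + (n - 1 - a)) % n : ℕ) : ℤ), ((m - 1 - ((m - 1 - b) * n + (n - 1 - a)) / n : ℕ) : ℤ)) ∈ S) from rfl,
      idx_mod _ (by omega), idx_div _ (by omega),
      show n - 1 - (n - 1 - a) = a from by omega,
      show m - 1 - (m - 1 - b) = b from by omega] at hfalse
    simp only [decide_eq_false_iff_not] at hfalse
    exact hfalse hhead
  have haa : a ≤ n - 1 - a := by omega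
  have hbb : b ≤ m - 1 - b :=
    Nat.le_of_mul_le_mul_right (by omega : b * n ≤ (m - 1 - b) * n) hn0
  have hABlow' : ∀ i : Fin (m * n), (i : ℕ) < k - 1 → lamAB n m S' i = false := by
    intro i hi
    simp only [lamAB, decide_eq_false_iff_not]
    rw [hmem]
    rintro (⟨hq, -⟩ | hq)
    · have hfalse := hABlow i (by omega)
      simp only [lamAB, decide_eq_false_iff_not] at hfalse
      exact hfalse hq
    · rw [Prod.mk.injEq] at hq
      obtain ⟨h1, h2⟩ := hq
      have hd : (i : ℕ) / n = b := by exact_mod_cast h2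
      have h3 := Nat.div_add_mod (i : ℕ) n
      rw [hd, Nat.mul_comm] at h3
      omega
  have hABtop' : lamAB n m S' ⟨k - 1, hk1N⟩ = true := by
    rw [show lamAB n m S' ⟨k - 1, hk1N⟩ = decide (((((k - 1) % n : ℕ) : ℤ), (((k - 1) / n : ℕ) : ℤ)) ∈ S') from rfl,
      show k - 1 = b * n + (a - 1) from by omega,
      idx_mod _ (by omega), idx_div _ (by omega)]
    simp only [decide_eq_true_eq]
    rw [hmem]
    right
    rw [Prod.mk.injEq]
    exact ⟨by omega, rfl⟩
  have hBAlow' : ∀ i : Fin (m * n), (i : ℕ) < k → lamBA n m S' i = false := by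
    intro i hi
    simp only [lamBA, decide_eq_false_iff_not]
    rw [hmem]
    rintro (⟨hq, -⟩ | hq)
    · have hfalse := hBAlowS i hi
      simp only [lamBA, decide_eq_false_iff_not] at hfalse
      exact hfalse hq
    · rw [Prod.mk.injEq] at hq
      obtain ⟨h1, h2⟩ := hq
      have hd : (i : ℕ) / n = b := by exact_mod_cast h2
      have h3 := Nat.div_add_mod (i : ℕ) n
      rw [hd, Nat.mul_comm] at h3
      have h4 : (i : ℕ) % n < n := Nat.mod_lt _ hn0
      omega
  have hCDlow' : ∀ i : Fin (m * n), (i : ℕ) < k → lamCD n m S' i = false := by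
    intro i hi
    simp only [lamCD, decide_eq_false_iff_not]
    rw [hmem]
    rintro (⟨hq, -⟩ | hq)
    · have hfalse := hCDlowS i hi
      simp only [lamCD, decide_eq_false_iff_not] at hfalse
      exact hfalse hq
    · rw [Prod.mk.injEq] at hq
      obtain ⟨h1, h2⟩ := hq
      have hdm : (i : ℕ) / n < m := (Nat.div_lt_iff_lt_mul hn0).2 i.isLt
      have hd : (i : ℕ) / n = m - 1 - b := by omega
      have h3 := Nat.div_add_mod (i : ℕ) n
      rw [hd, Nat.mul_comm] at h3
      have h4 : (i : ℕ) % n < n := Nat.mod_lt _ hn0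
      omega
  have hDClow1' : ∀ i : Fin (m * n), (i : ℕ) < k - 1 → lamDC n m S' i = false := by
    intro i hi
    simp only [lamDC, decide_eq_false_iff_not]
    rw [hmem]
    rintro (⟨hq, -⟩ | hq)
    · have hfalse := hDClowS i (by omega)
      simp only [lamDC, decide_eq_false_iff_not] at hfalse
      exact hfalse hq
    · rw [Prod.mk.injEq] at hq
      obtain ⟨h1, h2⟩ := hq
      have hdm : (i : ℕ) / n < m := (Nat.div_lt_iff_lt_mul hn0).2 i.isLt
      have hd : (i : ℕ) / n = m - 1 - b := by omega
      have h3 := Nat.div_add_mod (i : ℕ) n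
      rw [hd, Nat.mul_comm] at h3
      omega
  have hle : ∀ j : Fin (m * n), j ≤ (⟨k - 1, hk1N⟩ : Fin (m * n)) → (j : ℕ) < k := by
    intro j hj
    have h1 : (j : ℕ) ≤ k - 1 := hj
    omega
  refine ⟨lexlt_of_witness _ hABtop' (fun j hj => hBAlow' j (hle j hj)), ?_,
    lexlt_of_witness _ hABtop' (fun j hj => hCDlow' j (hle j hj))⟩
  by_cases hcase : m - 1 - b = b
  · obtain ⟨i₀, hagree, hlt₀⟩ := lexlt_iff.mp hDC
    rw [Bool.lt_iff] at hlt₀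
    obtain ⟨hDCi₀, hABi₀⟩ := hlt₀
    have hki₀ : k < (i₀ : ℕ) := by
      rcases Nat.lt_trichotomy (i₀ : ℕ) k with h | h | h
      · exact absurd (hABlow i₀ h) (by rw [hABi₀]; simp)
      · exfalso
        have heq : i₀ = (⟨k, hkN⟩ : Fin (m * n)) := Fin.ext h
        rw [heq, show lamDC n m S ⟨k, hkN⟩ = decide (((((k) % n : ℕ) : ℤ), ((m - 1 - (k) / n : ℕ) : ℤ)) ∈ S) from rfl,
          hk, idx_mod _ han, idx_div _ han, hcase] at hDCi₀
        simp only [decide_eq_false_iff_not] at hDCi₀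
        exact hDCi₀ hhead
      · exact h
    have hDCk1' : lamDC n m S' ⟨k - 1, hk1N⟩ = true := by
      rw [show lamDC n m S' ⟨k - 1, hk1N⟩ = decide (((((k - 1) % n : ℕ) : ℤ), ((m - 1 - (k - 1) / n : ℕ) : ℤ)) ∈ S') from rfl,
        show k - 1 = b * n + (a - 1) from by omega,
        idx_mod _ (by omega), idx_div _ (by omega), hcase]
      simp only [decide_eq_true_eq]
      rw [hmem]
      right
      rw [Prod.mk.injEq]
      exact ⟨by omega, rfl⟩
    have hABk' : lamAB n m S' ⟨k, hkN⟩ = false := by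
      rw [show lamAB n m S' ⟨k, hkN⟩ = decide (((((k) % n : ℕ) : ℤ), (((k) / n : ℕ) : ℤ)) ∈ S') from rfl,
        hk, idx_mod _ han, idx_div _ han]
      simp only [decide_eq_false_iff_not]
      rw [hmem]
      rintro (⟨-, hne⟩ | hq)
      · exact hne rfl
      · rw [Prod.mk.injEq] at hq
        exact absurd hq.1 (by omega)
    have hDCk' : lamDC n m S' ⟨k, hkN⟩ = false := by
      rw [show lamDC n m S' ⟨k, hkN⟩ = decide (((((k) % n : ℕ) : ℤ), ((m - 1 - (k) / n : ℕ) : ℤ)) ∈ S') from rfl,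
        hk, idx_mod _ han, idx_div _ han, hcase]
      simp only [decide_eq_false_iff_not]
      rw [hmem]
      rintro (⟨-, hne⟩ | hq)
      · exact hne rfl
      · rw [Prod.mk.injEq] at hq
        exact absurd hq.1 (by omega)
    have hABeq : ∀ j : Fin (m * n), k < (j : ℕ) → lamAB n m S' j = lamAB n m S j := by
      intro j hj
      simp only [lamAB]
      rw [decide_eq_decide, hmem]
      constructor
      · rintro (⟨h, -⟩ | hq)
        · exact h
        · exfalso
          rw [Prod.mk.injEq] at hq
          have hd : (j : ℕ) / n = b := by exact_mod_cast hq.2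
          have h3 := Nat.div_add_mod (j : ℕ) n
          rw [hd, Nat.mul_comm] at h3
          have h1 := hq.1
          omega
      · intro hjS
        left
        refine ⟨hjS, fun hq => ?_⟩
        rw [Prod.mk.injEq] at hq
        have hd : (j : ℕ) / n = b := by exact_mod_cast hq.2
        have h3 := Nat.div_add_mod (j : ℕ) n
        rw [hd, Nat.mul_comm] at h3
        have h1 := hq.1
        omega
    have hDCeq : ∀ j : Fin (m * n), k < (j : ℕ) → lamDC n m S' j = lamDC n m S j := by
      intro j hj
      simp only [lamDC]
      rw [decide_eq_decide, hmem]
      have hdm : (j : ℕ) / n < m := (Nat.div_lt_iff_lt_mul hn0).2 j.isLt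
      constructor
      · rintro (⟨h, -⟩ | hq)
        · exact h
        · exfalso
          rw [Prod.mk.injEq] at hq
          have h2 := hq.2
          have hd : (j : ℕ) / n = b := by omega
          have h3 := Nat.div_add_mod (j : ℕ) n
          rw [hd, Nat.mul_comm] at h3
          have h1 := hq.1
          omega
      · intro hjS
        left
        refine ⟨hjS, fun hq => ?_⟩
        rw [Prod.mk.injEq] at hq
        have h2 := hq.2
        have hd : (j : ℕ) / n = b := by omega
        have h3 := Nat.div_add_mod (j : ℕ) n
        rw [hd, Nat.mul_comm] at h3
        have h1 := hq.1
        omega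
    rw [lexlt_iff]
    refine ⟨i₀, fun j hj => ?_, ?_⟩
    · have hjv : (j : ℕ) < (i₀ : ℕ) := hj
      rcases Nat.lt_trichotomy (j : ℕ) k with h | h | h
      · rcases Nat.lt_or_ge (j : ℕ) (k - 1) with h' | h'
        · rw [hDClow1' j h', hABlow' j h']
        · have hv : (j : ℕ) = k - 1 := by omega
          have heq : j = (⟨k - 1, hk1N⟩ : Fin (m * n)) := Fin.ext hv
          rw [heq, hDCk1', hABtop']
      · have heq : j = (⟨k, hkN⟩ : Fin (m * n)) := Fin.ext h
        rw [heq, hDCk', hABk']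
      · rw [hDCeq j h, hABeq j h, hagree j hj]
    · rw [hDCeq i₀ hki₀, hABeq i₀ hki₀, hDCi₀, hABi₀]
      exact Bool.false_lt_true
  · have hmul : (b + 1) * n ≤ (m - 1 - b) * n := Nat.mul_le_mul_right n (by omega)
    have hexp : (b + 1) * n = b * n + n := by ring
    have hDClow' : ∀ i : Fin (m * n), (i : ℕ) < k → lamDC n m S' i = false := by
      intro i hi
      simp only [lamDC, decide_eq_false_iff_not]
      rw [hmem]
      rintro (⟨hq, -⟩ | hq)
      · have hfalse := hDClowS i hi
        simp only [lamDC, decide_eq_false_iff_not] at hfalse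
        exact hfalse hq
      · rw [Prod.mk.injEq] at hq
        obtain ⟨h1, h2⟩ := hq
        have hdm : (i : ℕ) / n < m := (Nat.div_lt_iff_lt_mul hn0).2 i.isLt
        have hd : (i : ℕ) / n = m - 1 - b := by omega
        have h3 := Nat.div_add_mod (i : ℕ) n
        rw [hd, Nat.mul_comm] at h3
        omega
    exact lexlt_of_witness _ hABtop' (fun j hj => hDClow' j (hle j hj))
end

section
/- Let n > m > 1 and let T ⊆ R be a set that contains at least one point of the bottom row {0,…,n−1} × {0}. Suppose λ_AB(T) is greater than or equal to each of λ_BA(T), λ_DC(T), λ_CD(T) in lexicographic order (so λ_AB(T) is a lexicographically largest corner string, possibly with ties). Let p = (x,0) be the element of T with minimal AB-scan index, let 0 ≤ x' < x, and let S = (T \ {p}) ∪ {(x',0)}. Then λ_AB(S) is strictly greater in lexicographic order than each of λ_BA(S), λ_DC(S) and λ_CD(S). (Hence, when all robots except the head occupy the target positions and the head stands on the bottom row strictly before the head-target in the scan order, the configuration is asymmetric with leading corner A.) -/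
private lemma lexlt_of {N : ℕ} {f g : Fin N → Bool} (i : Fin N)
    (h : ∀ j, j < i → f j = g j) (hf : f i = false) (hg : g i = true) :
    toLex f < toLex g :=
  ⟨i, h, show f i < g i by rw [hf, hg]; exact Bool.false_lt_true⟩

private lemma false_upto_of_le {N : ℕ} {f g : Fin N → Bool}
    (hle : toLex f ≤ toLex g) (i : Fin N) (hg : ∀ j : Fin N, j ≤ i → g j = false) :
    ∀ j : Fin N, j ≤ i → f j = false := by
  rcases eq_or_lt_of_le hle with heq | hlt
  · intro j hj
    have hfg : f = g := toLex_inj.mp heq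
    rw [hfg]; exact hg j hj
  · obtain ⟨k, hagree, hk⟩ := hlt
    have hgk : g k = true := (Bool.lt_iff.mp hk).2
    have hik : i < k := by
      by_contra hcon
      rw [hg k (le_of_not_gt hcon)] at hgk
      exact Bool.noConfusion hgk
    intro j hj
    have h3 : f j = g j := hagree j (lt_of_le_of_lt hj hik)
    rw [h3]
    exact hg j hj

private lemma lamAB_row0 (n m : ℕ) (S : Finset (ℤ × ℤ)) (j : Fin (m * n)) (hj : (j : ℕ) < n) :
    lamAB n m S j = decide ((((j : ℕ) : ℤ), (0 : ℤ)) ∈ S) := by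
  have h1 : (((j : ℕ) : ℤ)) % (n : ℤ) = ((j : ℕ) : ℤ) :=
    Int.emod_eq_of_lt (by positivity) (by exact_mod_cast hj)
  have h2 : (((j : ℕ) : ℤ)) / (n : ℤ) = 0 :=
    Int.ediv_eq_zero_of_lt (by positivity) (by exact_mod_cast hj)
  simp only [lamAB, h1, h2]

private lemma lamBA_row0 (n m : ℕ) (S : Finset (ℤ × ℤ)) (j : Fin (m * n)) (hj : (j : ℕ) < n) :
    lamBA n m S j = decide ((((n - 1 - (j : ℕ) : ℕ) : ℤ), (0 : ℤ)) ∈ S) := by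
  have h2 : (((j : ℕ) : ℤ)) / (n : ℤ) = 0 :=
    Int.ediv_eq_zero_of_lt (by positivity) (by exact_mod_cast hj)
  simp only [lamBA, Nat.mod_eq_of_lt hj, h2]

private lemma lamDC_row0 (n m : ℕ) (S : Finset (ℤ × ℤ)) (j : Fin (m * n)) (hj : (j : ℕ) < n) :
    lamDC n m S j = decide ((((j : ℕ) : ℤ), (((m - 1 : ℕ)) : ℤ)) ∈ S) := by
  have h1 : (((j : ℕ) : ℤ)) % (n : ℤ) = ((j : ℕ) : ℤ) :=
    Int.emod_eq_of_lt (by positivity) (by exact_mod_cast hj)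
  simp only [lamDC, h1, Nat.div_eq_of_lt hj, Nat.sub_zero]

private lemma lamCD_top (n m : ℕ) (hn : 0 < n) (S : Finset (ℤ × ℤ)) (j : Fin (m * n)) (r : ℕ)
    (hr : r < n) (hj : (j : ℕ) = r + (m - 1) * n) :
    lamCD n m S j = decide ((((n - 1 - r : ℕ) : ℤ), (0 : ℤ)) ∈ S) := by
  have hmod : (j : ℕ) % n = r := by
    rw [hj, Nat.add_mul_mod_self_right, Nat.mod_eq_of_lt hr]
  have hdiv : (j : ℕ) / n = m - 1 := by
    rw [hj, Nat.add_mul_div_right _ _ hn, Nat.div_eq_of_lt hr, Nat.zero_add]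
  simp only [lamCD, hmod, hdiv, Nat.sub_self, Nat.cast_zero]

/-- If `λ_AB(T)` is a (possibly tied) lexicographically largest corner string of `T`,
the scan-minimal element `p = (x,0)` of `T` lies on the bottom row, and `p` is moved
to a strictly earlier bottom-row position `(x', 0)`, then in the resulting
configuration `λ_AB` is the strictly lexicographically largest corner string. -/
theorem head_before_target_makes_asymmetric (n m : ℕ) (hm : 1 < m) (hmn : m < n)
    (T : Finset (ℤ × ℤ)) (hT : T ⊆ Rset n m)
    (hbottom : ∃ p ∈ T, p.2 = 0)
    (hBA : toLex (lamBA n m T) ≤ toLex (lamAB n m T))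
    (hDC : toLex (lamDC n m T) ≤ toLex (lamAB n m T))
    (hCD : toLex (lamCD n m T) ≤ toLex (lamAB n m T))
    (x : ℤ) (hp : ((x, 0) : ℤ × ℤ) ∈ T)
    (hmin : ∀ q ∈ T, 0 * n + x ≤ q.2 * n + q.1)
    (x' : ℤ) (hx'0 : 0 ≤ x') (hx' : x' < x)
    (S : Finset (ℤ × ℤ)) (hSdef : S = (T.erase (x, 0)) ∪ {(x', 0)}) :
    toLex (lamBA n m S) < toLex (lamAB n m S) ∧
    toLex (lamDC n m S) < toLex (lamAB n m S) ∧
    toLex (lamCD n m S) < toLex (lamAB n m S) := by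
  have hn : 0 < n := by omega
  have hR := hT hp
  simp only [Rset, Finset.mem_product, Finset.mem_Icc] at hR
  have hx0 : 0 ≤ x := hR.1.1
  have hxn : x ≤ (n : ℤ) - 1 := hR.1.2
  set a := x.toNat with ha
  set a' := x'.toNat with ha'
  have haa : (a : ℤ) = x := by omega
  have haa' : (a' : ℤ) = x' := by omega
  have han : a < n := by omega
  have ha'a : a' < a := by omega
  have hnN : n ≤ m * n := Nat.le_mul_of_pos_left n (by omega)
  have hsub : (m - 1) * n = m * n - n := Nat.sub_one_mul m n
  have memS : ∀ q : ℤ × ℤ, q ∈ S ↔ (q ∈ T ∧ q ≠ (x, 0)) ∨ q = (x', 0) := by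
    intro q
    subst hSdef
    simp only [Finset.mem_union, Finset.mem_erase, Finset.mem_singleton]
    tauto
  have memS_eq : ∀ P : ℤ × ℤ, P ≠ (x, 0) → P ≠ (x', 0) → (P ∈ S ↔ P ∈ T) := by
    intro P h1 h2
    rw [memS]
    simp [h1, h2]
  have hTfalse : ∀ c : ℤ, c < x → ((c, (0 : ℤ)) : ℤ × ℤ) ∉ T := by
    intro c hc hmem
    have h := hmin (c, 0) hmem
    simp only [zero_mul, zero_add] at h
    omega
  -- AB facts
  have hABT_false : ∀ j : Fin (m * n), (j : ℕ) ≤ a' → lamAB n m T j = false := by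
    intro j hj
    rw [lamAB_row0 n m T j (by omega), decide_eq_false_iff_not]
    exact hTfalse _ (by omega)
  have hABS_false : ∀ j : Fin (m * n), (j : ℕ) < a' → lamAB n m S j = false := by
    intro j hj
    rw [lamAB_row0 n m S j (by omega), decide_eq_false_iff_not, memS]
    rintro (⟨hmem, -⟩ | heq)
    · exact hTfalse _ (by omega) hmem
    · rw [Prod.mk.injEq] at heq
      obtain ⟨h1, -⟩ := heq
      omega
  have hABS_true : ∀ j : Fin (m * n), (j : ℕ) = a' → lamAB n m S j = true := by
    intro j hj
    rw [lamAB_row0 n m S j (by omega), decide_eq_true_eq, memS]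
    right
    rw [Prod.mk.injEq]
    exact ⟨by omega, rfl⟩
  have hABlt : toLex (lamAB n m T) < toLex (lamAB n m S) :=
    lexlt_of ⟨a', by omega⟩
      (fun j hj => by
        have hj' : (j : ℕ) < a' := hj
        exact (hABT_false j (Nat.le_of_lt hj')).trans (hABS_false j hj').symm)
      (hABT_false _ (le_refl a')) (hABS_true _ rfl)
  -- BA facts
  have hBAeq : ∀ j : Fin (m * n), (j : ℕ) < n - 1 - a → lamBA n m S j = lamBA n m T j := by
    intro j hj
    rw [lamBA_row0 n m S j (by omega), lamBA_row0 n m T j (by omega)]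
    refine decide_eq_decide.mpr (memS_eq _ ?_ ?_) <;>
    · intro h
      rw [Prod.mk.injEq] at h
      obtain ⟨h1, -⟩ := h
      omega
  have hBAS_false : ∀ j : Fin (m * n), (j : ℕ) = n - 1 - a → lamBA n m S j = false := by
    intro j hj
    rw [lamBA_row0 n m S j (by omega), decide_eq_false_iff_not, memS]
    have e : n - 1 - (j : ℕ) = a := by omega
    rw [e, haa]
    rintro (⟨-, hne⟩ | heq)
    · exact hne rfl
    · rw [Prod.mk.injEq] at heq
      obtain ⟨h1, -⟩ := heq
      omega
  have hBAT_true : ∀ j : Fin (m * n), (j : ℕ) = n - 1 - a → lamBA n m T j = true := by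
    intro j hj
    rw [lamBA_row0 n m T j (by omega), decide_eq_true_eq]
    have e : n - 1 - (j : ℕ) = a := by omega
    rw [e, haa]
    exact hp
  have hBAslt : toLex (lamBA n m S) < toLex (lamBA n m T) :=
    lexlt_of ⟨n - 1 - a, by omega⟩
      (fun j hj => hBAeq j hj) (hBAS_false _ rfl) (hBAT_true _ rfl)
  -- DC facts
  have hDCT_false : ∀ j : Fin (m * n), (j : ℕ) ≤ a' → lamDC n m T j = false := by
    intro j hj
    exact false_upto_of_le hDC ⟨a', by omega⟩
      (fun k hk => hABT_false k hk) j hj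
  have hDCS_false : ∀ j : Fin (m * n), (j : ℕ) ≤ a' → lamDC n m S j = false := by
    intro j hj
    have hT' := hDCT_false j hj
    rw [lamDC_row0 n m T j (by omega), decide_eq_false_iff_not] at hT'
    rw [lamDC_row0 n m S j (by omega), decide_eq_false_iff_not, memS]
    rintro (⟨hmem, -⟩ | heq)
    · exact hT' hmem
    · rw [Prod.mk.injEq] at heq
      obtain ⟨-, h2⟩ := heq
      omega
  have hDCslt : toLex (lamDC n m S) < toLex (lamAB n m S) :=
    lexlt_of ⟨a', by omega⟩
      (fun j hj => by
        have hj' : (j : ℕ) < a' := hj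
        exact (hDCS_false j (Nat.le_of_lt hj')).trans (hABS_false j hj').symm)
      (hDCS_false _ (le_refl a')) (hABS_true _ rfl)
  -- CD facts
  have hCDeq : ∀ j : Fin (m * n), (j : ℕ) < (n - 1 - a) + (m - 1) * n →
      lamCD n m S j = lamCD n m T j := by
    intro j hj
    have hd := Nat.div_add_mod (j : ℕ) n
    have hmlt : (j : ℕ) / n < m := Nat.div_lt_of_lt_mul (lt_of_lt_of_eq j.isLt (Nat.mul_comm m n))
    have hmodlt : (j : ℕ) % n < n := Nat.mod_lt _ hn
    show decide _ = decide _
    refine decide_eq_decide.mpr (memS_eq _ ?_ ?_) <;>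
    · intro h
      rw [Prod.mk.injEq] at h
      obtain ⟨h1, h2⟩ := h
      have hq : (j : ℕ) / n = m - 1 := by omega
      have hc : n * ((j : ℕ) / n) = (m - 1) * n := by rw [hq, Nat.mul_comm]
      omega
  have hCDS_false : ∀ j : Fin (m * n), (j : ℕ) = (n - 1 - a) + (m - 1) * n →
      lamCD n m S j = false := by
    intro j hj
    rw [lamCD_top n m hn S j (n - 1 - a) (by omega) hj, decide_eq_false_iff_not, memS]
    have e : n - 1 - (n - 1 - a) = a := by omega
    rw [e, haa]
    rintro (⟨-, hne⟩ | heq)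
    · exact hne rfl
    · rw [Prod.mk.injEq] at heq
      obtain ⟨h1, -⟩ := heq
      omega
  have hCDT_true : ∀ j : Fin (m * n), (j : ℕ) = (n - 1 - a) + (m - 1) * n →
      lamCD n m T j = true := by
    intro j hj
    rw [lamCD_top n m hn T j (n - 1 - a) (by omega) hj, decide_eq_true_eq]
    have e : n - 1 - (n - 1 - a) = a := by omega
    rw [e, haa]
    exact hp
  have hCDslt : toLex (lamCD n m S) < toLex (lamCD n m T) :=
    lexlt_of ⟨(n - 1 - a) + (m - 1) * n, by omega⟩
      (fun j hj => hCDeq j hj) (hCDS_false _ rfl) (hCDT_true _ rfl)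
  exact ⟨(hBAslt.trans_le hBA).trans hABlt, hDCslt,
    (hCDslt.trans_le hCD).trans hABlt⟩
end

section
/- Let S be a nonempty finite subset of ℤ × ℤ whose bounding box {x_min,…,x_max} × {y_min,…,y_max} has width w = x_max − x_min + 1 and height h = y_max − y_min + 1 with w ≠ h. If φ is a graph automorphism of the grid graph G with φ(S) = S (setwise), then φ is one of the following four maps: the identity; (x,y) ↦ (x_min + x_max − x, y); (x,y) ↦ (x, y_min + y_max − y); (x,y) ↦ (x_min + x_max − x, y_min + y_max − y). That is, any symmetry of a configuration with a non-square smallest enclosing rectangle is a reflection across a center line of the rectangle or the 180° rotation about its center. -/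
lemma unit_iff (a b : ℤ) : a.natAbs + b.natAbs = 1 ↔
    (a = 0 ∧ b = 1) ∨ (a = 0 ∧ b = -1) ∨ (a = 1 ∧ b = 0) ∨ (a = -1 ∧ b = 0) := by
  omega

lemma adj_iff (u v : ℤ × ℤ) :
    gridGraph.Adj u v ↔ (u.1 - v.1).natAbs + (u.2 - v.2).natAbs = 1 := by
  show |u.1 - v.1| + |u.2 - v.2| = 1 ↔ _
  rw [Int.abs_eq_natAbs, Int.abs_eq_natAbs]
  omega

lemma unique_opp {p q r z : ℤ × ℤ} (hq : gridGraph.Adj p q) (hr : gridGraph.Adj p r)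
    (hopp : q.1 + r.1 = 2 * p.1 ∧ q.2 + r.2 = 2 * p.2)
    (hzq : gridGraph.Adj z q) (hzr : gridGraph.Adj z r) : z = p := by
  rw [adj_iff] at hq hr hzq hzr
  rw [Prod.ext_iff]
  omega

set_option maxHeartbeats 1000000 in
lemma common_two {w u v z : ℤ × ℤ} (hu : gridGraph.Adj w u) (hv : gridGraph.Adj w v)
    (hne : u ≠ v) (hnopp : ¬(u.1 + v.1 = 2 * w.1 ∧ u.2 + v.2 = 2 * w.2))
    (hzu : gridGraph.Adj z u) (hzv : gridGraph.Adj z v) :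
    z = w ∨ z = (u.1 + v.1 - w.1, u.2 + v.2 - w.2) := by
  obtain ⟨w1, w2⟩ := w
  obtain ⟨u1, u2⟩ := u
  obtain ⟨v1, v2⟩ := v
  obtain ⟨z1, z2⟩ := z
  rw [adj_iff, unit_iff] at hu hv hzu hzv
  simp only [Prod.mk.injEq] at hnopp ⊢
  rw [Ne, Prod.mk.injEq, not_and_or] at hne
  simp only at hu hv hzu hzv hnopp hne ⊢
  rcases hu with ⟨h1,h2⟩|⟨h1,h2⟩|⟨h1,h2⟩|⟨h1,h2⟩ <;>
  rcases hv with ⟨h3,h4⟩|⟨h3,h4⟩|⟨h3,h4⟩|⟨h3,h4⟩ <;>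
  rcases hzu with ⟨h5,h6⟩|⟨h5,h6⟩|⟨h5,h6⟩|⟨h5,h6⟩ <;>
  rcases hzv with ⟨h7,h8⟩|⟨h7,h8⟩|⟨h7,h8⟩|⟨h7,h8⟩ <;>
  omega

lemma second_adj {w u v : ℤ × ℤ} (hu : gridGraph.Adj w u) (hv : gridGraph.Adj w v)
    (hne : u ≠ v) (hnopp : ¬(u.1 + v.1 = 2 * w.1 ∧ u.2 + v.2 = 2 * w.2)) :
    gridGraph.Adj u (u.1 + v.1 - w.1, u.2 + v.2 - w.2) ∧
    gridGraph.Adj v (u.1 + v.1 - w.1, u.2 + v.2 - w.2) ∧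
    (u.1 + v.1 - w.1, u.2 + v.2 - w.2) ≠ w := by
  obtain ⟨w1, w2⟩ := w
  obtain ⟨u1, u2⟩ := u
  obtain ⟨v1, v2⟩ := v
  rw [adj_iff] at hu hv
  rw [adj_iff, adj_iff, Ne, Prod.mk.injEq, not_and_or]
  rw [Ne, Prod.mk.injEq, not_and_or] at hne
  simp only [Prod.mk.injEq] at hnopp
  simp only at hu hv hnopp hne ⊢
  omega

lemma phi_opp (φ : gridGraph ≃g gridGraph) {p q r : ℤ × ℤ}
    (hq : gridGraph.Adj p q) (hr : gridGraph.Adj p r)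
    (hopp : q.1 + r.1 = 2 * p.1 ∧ q.2 + r.2 = 2 * p.2) :
    (φ q).1 + (φ r).1 = 2 * (φ p).1 ∧ (φ q).2 + (φ r).2 = 2 * (φ p).2 := by
  by_contra h
  have hq' : gridGraph.Adj (φ p) (φ q) := φ.map_adj_iff.mpr hq
  have hr' : gridGraph.Adj (φ p) (φ r) := φ.map_adj_iff.mpr hr
  have hqr : q ≠ r := by
    rintro rfl
    have := hq.ne
    rw [adj_iff] at hq
    exact this (by rw [Prod.ext_iff]; omega)
  obtain ⟨hs1, hs2, hs3⟩ := second_adj hq' hr' (fun he => hqr (φ.injective he)) h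
  set s : ℤ × ℤ := ((φ q).1 + (φ r).1 - (φ p).1, (φ q).2 + (φ r).2 - (φ p).2) with hsdef
  have h1 : gridGraph.Adj (φ.symm s) q := by
    have := φ.symm.map_adj_iff.mpr hs1
    rw [φ.symm_apply_apply] at this
    exact this.symm
  have h2 : gridGraph.Adj (φ.symm s) r := by
    have := φ.symm.map_adj_iff.mpr hs2
    rw [φ.symm_apply_apply] at this
    exact this.symm
  have := unique_opp hq hr hopp h1 h2
  apply hs3
  rw [← this, φ.apply_symm_apply]

/-- images of non-opposite pairs are non-opposite -/
lemma phi_nopp (φ : gridGraph ≃g gridGraph) {p q r : ℤ × ℤ}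
    (hq : gridGraph.Adj p q) (hr : gridGraph.Adj p r)
    (hnopp : ¬(q.1 + r.1 = 2 * p.1 ∧ q.2 + r.2 = 2 * p.2)) :
    ¬((φ q).1 + (φ r).1 = 2 * (φ p).1 ∧ (φ q).2 + (φ r).2 = 2 * (φ p).2) := by
  intro h
  apply hnopp
  have := phi_opp φ.symm (φ.map_adj_iff.mpr hq) (φ.map_adj_iff.mpr hr) h
  simpa using this

lemma phi_square (φ : gridGraph ≃g gridGraph) {p q r : ℤ × ℤ}
    (hq : gridGraph.Adj p q) (hr : gridGraph.Adj p r) (hne : q ≠ r)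
    (hnopp : ¬(q.1 + r.1 = 2 * p.1 ∧ q.2 + r.2 = 2 * p.2)) :
    φ (q.1 + r.1 - p.1, q.2 + r.2 - p.2) =
      ((φ q).1 + (φ r).1 - (φ p).1, (φ q).2 + (φ r).2 - (φ p).2) := by
  obtain ⟨hs1, hs2, hs3⟩ := second_adj hq hr hne hnopp
  set s : ℤ × ℤ := (q.1 + r.1 - p.1, q.2 + r.2 - p.2) with hsdef
  have hq' : gridGraph.Adj (φ p) (φ q) := φ.map_adj_iff.mpr hq
  have hr' : gridGraph.Adj (φ p) (φ r) := φ.map_adj_iff.mpr hr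
  have hne' : φ q ≠ φ r := fun he => hne (φ.injective he)
  have hnopp' := phi_nopp φ hq hr hnopp
  have h1 : gridGraph.Adj (φ s) (φ q) := φ.map_adj_iff.mpr hs1.symm
  have h2 : gridGraph.Adj (φ s) (φ r) := φ.map_adj_iff.mpr hs2.symm
  rcases common_two hq' hr' hne' hnopp' h1 h2 with h | h
  · exact absurd (φ.injective h) hs3
  · exact h

lemma phi_formula (φ : gridGraph ≃g gridGraph) :
    ∃ a b f1 f2 g1 g2 : ℤ,
      f1.natAbs + f2.natAbs = 1 ∧ g1.natAbs + g2.natAbs = 1 ∧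
      ¬(f1 = g1 ∧ f2 = g2) ∧ ¬(f1 + g1 = 0 ∧ f2 + g2 = 0) ∧
      ∀ x y : ℤ, φ (x, y) = (a + x * f1 + y * g1, b + x * f2 + y * g2) := by
  -- increments
  have hAdjH : ∀ x y : ℤ, gridGraph.Adj (x, y) (x + 1, y) := by
    intro x y; rw [adj_iff]; dsimp only; omega
  have hAdjV : ∀ x y : ℤ, gridGraph.Adj (x, y) (x, y + 1) := by
    intro x y; rw [adj_iff]; dsimp only; omega
  -- horizontal increment vector at (x,y)
  set A : ℤ → ℤ → ℤ × ℤ := fun x y =>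
    ((φ (x + 1, y)).1 - (φ (x, y)).1, (φ (x + 1, y)).2 - (φ (x, y)).2) with hA
  set B : ℤ → ℤ → ℤ × ℤ := fun x y =>
    ((φ (x, y + 1)).1 - (φ (x, y)).1, (φ (x, y + 1)).2 - (φ (x, y)).2) with hB
  -- oppositeness along a line
  have hAx : ∀ x y : ℤ, A (x + 1) y = A x y := by
    intro x y
    have h := phi_opp φ (p := (x + 1, y)) (q := (x, y)) (r := (x + 2, y))
      (hAdjH x y).symm
      (by have := hAdjH (x+1) y; rwa [show (x:ℤ)+1+1 = x+2 by ring] at this)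
      (by dsimp only; constructor <;> ring)
    try dsimp only at h
    simp only [hA, Prod.mk.injEq]
    rw [show ((x:ℤ) + 1 + 1) = x + 2 by ring]
    constructor <;> omega
  have hAx' : ∀ x y : ℤ, A (x - 1) y = A x y := by
    intro x y
    have := hAx (x - 1) y
    rw [show (x:ℤ) - 1 + 1 = x by ring] at this
    exact this.symm
  have hAy : ∀ x y : ℤ, A x (y + 1) = A x y := by
    intro x y
    have h := phi_square φ (p := (x, y)) (q := (x + 1, y)) (r := (x, y + 1))
      (hAdjH x y) (hAdjV x y)
      (by intro h; rw [Prod.ext_iff] at h; dsimp only at h; omega)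
      (by dsimp only; intro h; omega)
    dsimp only at h
    rw [show ((x:ℤ) + 1 + x - x, y + (y + 1) - y) = (x + 1, y + 1) by
      simp only [Prod.mk.injEq]; constructor <;> ring] at h
    rw [Prod.ext_iff] at h
    simp only [hA, Prod.mk.injEq]
    constructor <;> omega
  have hAy' : ∀ x y : ℤ, A x (y - 1) = A x y := by
    intro x y
    have := hAy x (y - 1)
    rw [show (y:ℤ) - 1 + 1 = y by ring] at this
    exact this.symm
  have hAconst : ∀ x y : ℤ, A x y = A 0 0 := by
    intro x y
    have hline : ∀ x : ℤ, ∀ y : ℤ, A x y = A 0 y := by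
      intro x
      induction x using Int.induction_on with
      | zero => intro y; rfl
      | succ k ih => intro y; rw [hAx k y]; exact ih y
      | pred k ih => intro y; rw [hAx' (-k) y]; exact ih y
    rw [hline x y]
    induction y using Int.induction_on with
    | zero => rfl
    | succ k ih => rw [hAy 0 k]; exact ih
    | pred k ih => rw [hAy' 0 (-k)]; exact ih
  -- same for B : use the same square lemma
  have hBy : ∀ x y : ℤ, B x (y + 1) = B x y := by
    intro x y
    have h := phi_opp φ (p := (x, y + 1)) (q := (x, y)) (r := (x, y + 2))
      (hAdjV x y).symm
      (by have := hAdjV x (y+1); rwa [show (y:ℤ)+1+1 = y+2 by ring] at this)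
      (by dsimp only; constructor <;> ring)
    try dsimp only at h
    simp only [hB, Prod.mk.injEq]
    rw [show ((y:ℤ) + 1 + 1) = y + 2 by ring]
    constructor <;> omega
  have hBy' : ∀ x y : ℤ, B x (y - 1) = B x y := by
    intro x y
    have := hBy x (y - 1)
    rw [show (y:ℤ) - 1 + 1 = y by ring] at this
    exact this.symm
  have hBx : ∀ x y : ℤ, B (x + 1) y = B x y := by
    intro x y
    have h := phi_square φ (p := (x, y)) (q := (x + 1, y)) (r := (x, y + 1))
      (hAdjH x y) (hAdjV x y)
      (by intro h; rw [Prod.ext_iff] at h; dsimp only at h; omega)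
      (by dsimp only; intro h; omega)
    dsimp only at h
    rw [show ((x:ℤ) + 1 + x - x, y + (y + 1) - y) = (x + 1, y + 1) by
      simp only [Prod.mk.injEq]; constructor <;> ring] at h
    rw [Prod.ext_iff] at h
    simp only [hB, Prod.mk.injEq]
    constructor <;> omega
  have hBx' : ∀ x y : ℤ, B (x - 1) y = B x y := by
    intro x y
    have := hBx (x - 1) y
    rw [show (x:ℤ) - 1 + 1 = x by ring] at this
    exact this.symm
  have hBconst : ∀ x y : ℤ, B x y = B 0 0 := by
    intro x y
    have hline : ∀ x : ℤ, ∀ y : ℤ, B x y = B 0 y := by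
      intro x
      induction x using Int.induction_on with
      | zero => intro y; rfl
      | succ k ih => intro y; rw [hBx k y]; exact ih y
      | pred k ih => intro y; rw [hBx' (-k) y]; exact ih y
    rw [hline x y]
    induction y using Int.induction_on with
    | zero => rfl
    | succ k ih => rw [hBy 0 k]; exact ih
    | pred k ih => rw [hBy' 0 (-k)]; exact ih
  refine ⟨(φ (0, 0)).1, (φ (0, 0)).2, (A 0 0).1, (A 0 0).2, (B 0 0).1, (B 0 0).2,
    ?_, ?_, ?_, ?_, ?_⟩
  · have := φ.map_adj_iff.mpr (hAdjH 0 0)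
    rw [adj_iff] at this
    simp only [hA]
    omega
  · have := φ.map_adj_iff.mpr (hAdjV 0 0)
    rw [adj_iff] at this
    simp only [hB]
    omega
  · -- f ≠ g
    intro ⟨h1, h2⟩
    have : φ (1, 0) = φ (0, 1) := by
      rw [Prod.ext_iff]
      simp only [hA, hB] at h1 h2
      simp only [show ((0:ℤ)+1) = 1 by ring] at h1 h2
      omega
    have := φ.injective this
    simp [Prod.ext_iff] at this
  · -- f + g ≠ 0
    intro ⟨h1, h2⟩
    have hnopp := phi_nopp φ (p := ((0:ℤ), (0:ℤ))) (q := (1, 0)) (r := (0, 1))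
      (by rw [adj_iff]; simp) (by rw [adj_iff]; simp) (by simp)
    apply hnopp
    simp only [hA, hB, show ((0:ℤ)+1) = 1 by ring] at h1 h2
    constructor <;> omega
  · -- the formula
    have hstepx : ∀ x y : ℤ, φ (x + 1, y) =
        ((φ (x, y)).1 + (A 0 0).1, (φ (x, y)).2 + (A 0 0).2) := by
      intro x y
      have := hAconst x y
      simp only [hA, Prod.ext_iff] at this ⊢
      constructor <;> omega
    have hstepy : ∀ x y : ℤ, φ (x, y + 1) =
        ((φ (x, y)).1 + (B 0 0).1, (φ (x, y)).2 + (B 0 0).2) := by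
      intro x y
      have := hBconst x y
      simp only [hB, Prod.ext_iff] at this ⊢
      constructor <;> omega
    have hcol : ∀ y : ℤ, φ (0, y) =
        ((φ (0,0)).1 + y * (B 0 0).1, (φ (0,0)).2 + y * (B 0 0).2) := by
      intro y
      induction y using Int.induction_on with
      | zero => simp
      | succ k ih =>
        rw [hstepy 0 k, ih, Prod.ext_iff]
        constructor <;> simp <;> ring
      | pred k ih =>
        have := hstepy 0 (-k - 1)
        rw [show (-(k:ℤ) - 1 + 1) = -k by ring] at this
        rw [ih] at this
        rw [show (-(k:ℤ) - 1) = -(k+1) by ring] at this ⊢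
        rw [Prod.ext_iff] at this ⊢
        push_cast at this ⊢
        constructor <;> [have h := this.1; have h := this.2] <;> nlinarith [h]
    intro x y
    induction x using Int.induction_on with
    | zero => rw [hcol y]; simp
    | succ k ih =>
      rw [hstepx k y, ih, Prod.ext_iff]
      constructor <;> simp <;> ring
    | pred k ih =>
      have := hstepx (-k - 1) y
      rw [show (-(k:ℤ) - 1 + 1) = -k by ring] at this
      rw [ih] at this
      rw [show (-(k:ℤ) - 1) = -(k+1) by ring] at this ⊢
      rw [Prod.ext_iff] at this ⊢
      push_cast at this ⊢
      constructor <;> [have h := this.1; have h := this.2] <;> nlinarith [h]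

/-- Any symmetry of a configuration whose smallest enclosing rectangle is non-square
is the identity, a reflection across a center line of the rectangle, or the 180°
rotation about its center. -/
theorem symmetry_of_nonsquare_configuration (S : Finset (ℤ × ℤ)) (hS : S.Nonempty)
    (xmin xmax ymin ymax : ℤ)
    (hxmin : IsLeast (Prod.fst '' (S : Set (ℤ × ℤ))) xmin)
    (hxmax : IsGreatest (Prod.fst '' (S : Set (ℤ × ℤ))) xmax)
    (hymin : IsLeast (Prod.snd '' (S : Set (ℤ × ℤ))) ymin)
    (hymax : IsGreatest (Prod.snd '' (S : Set (ℤ × ℤ))) ymax)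
    (hwh : xmax - xmin + 1 ≠ ymax - ymin + 1)
    (φ : gridGraph ≃g gridGraph)
    (hφ : ⇑φ '' (S : Set (ℤ × ℤ)) = (S : Set (ℤ × ℤ))) :
    (∀ p : ℤ × ℤ, φ p = p) ∨
    (∀ p : ℤ × ℤ, φ p = (xmin + xmax - p.1, p.2)) ∨
    (∀ p : ℤ × ℤ, φ p = (p.1, ymin + ymax - p.2)) ∨
    (∀ p : ℤ × ℤ, φ p = (xmin + xmax - p.1, ymin + ymax - p.2)) := by
  obtain ⟨a, b, f1, f2, g1, g2, hf, hg, hfg, hfg', hform⟩ := phi_formula φ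
  -- membership facts
  have hmem : ∀ p : ℤ × ℤ, p ∈ S → φ p ∈ S := by
    intro p hp
    have : φ p ∈ ⇑φ '' (S : Set (ℤ × ℤ)) := Set.mem_image_of_mem _ hp
    rw [hφ] at this
    exact this
  -- bounds for elements of S
  have hb : ∀ p : ℤ × ℤ, p ∈ S → xmin ≤ p.1 ∧ p.1 ≤ xmax ∧ ymin ≤ p.2 ∧ p.2 ≤ ymax := by
    intro p hp
    exact ⟨hxmin.2 ⟨p, hp, rfl⟩, hxmax.2 ⟨p, hp, rfl⟩, hymin.2 ⟨p, hp, rfl⟩, hymax.2 ⟨p, hp, rfl⟩⟩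
  -- witnesses on each side of the box
  obtain ⟨px0, hpx0, hpx0e⟩ := hxmin.1
  obtain ⟨px1, hpx1, hpx1e⟩ := hxmax.1
  obtain ⟨py0, hpy0, hpy0e⟩ := hymin.1
  obtain ⟨py1, hpy1, hpy1e⟩ := hymax.1
  -- images in S give inequalities
  have himg : ∀ p : ℤ × ℤ, p ∈ S →
      xmin ≤ a + p.1 * f1 + p.2 * g1 ∧ a + p.1 * f1 + p.2 * g1 ≤ xmax ∧
      ymin ≤ b + p.1 * f2 + p.2 * g2 ∧ b + p.1 * f2 + p.2 * g2 ≤ ymax := by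
    intro p hp
    have h := hb (φ p) (hmem p hp)
    rw [show p = (p.1, p.2) from rfl, hform p.1 p.2] at h
    exact h
  have hcases : (f2 = 0 ∧ g1 = 0) ∨ (f1 = 0 ∧ g2 = 0) := by omega
  rcases hcases with ⟨h2, h3⟩ | ⟨h1, h4⟩
  · -- non-swap case
    subst h2 h3
    have hf1 : f1 = 1 ∨ f1 = -1 := by omega
    have hg2 : g2 = 1 ∨ g2 = -1 := by omega
    have ix0 := himg px0 hpx0
    have ix1 := himg px1 hpx1
    have iy0 := himg py0 hpy0
    have iy1 := himg py1 hpy1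
    have bx0 := hb px0 hpx0
    have bx1 := hb px1 hpx1
    have by0 := hb py0 hpy0
    have by1 := hb py1 hpy1
    rcases hf1 with rfl | rfl <;> rcases hg2 with rfl | rfl
    · left
      intro p
      rw [show p = (p.1, p.2) from rfl, hform p.1 p.2]
      have ha : a = 0 := by
        rw [hpx0e] at ix0; rw [hpx1e] at ix1; simp only [mul_one, mul_zero, add_zero] at *
        omega
      have hbb : b = 0 := by
        rw [hpy0e] at iy0; rw [hpy1e] at iy1; simp only [mul_one, mul_zero, add_zero] at *
        omega
      subst ha hbb
      simp
    · right; right; left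
      intro p
      rw [show p = (p.1, p.2) from rfl, hform p.1 p.2]
      have ha : a = 0 := by
        rw [hpx0e] at ix0; rw [hpx1e] at ix1; simp only [mul_one, mul_zero, add_zero] at *
        omega
      have hbb : b = ymin + ymax := by
        rw [hpy0e] at iy0; rw [hpy1e] at iy1
        simp only [mul_one, mul_zero, add_zero, mul_neg_one] at *
        omega
      subst ha hbb
      simp only [Prod.mk.injEq]
      constructor <;> ring
    · right; left
      intro p
      rw [show p = (p.1, p.2) from rfl, hform p.1 p.2]
      have ha : a = xmin + xmax := by
        rw [hpx0e] at ix0; rw [hpx1e] at ix1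
        simp only [mul_one, mul_zero, add_zero, mul_neg_one] at *
        omega
      have hbb : b = 0 := by
        rw [hpy0e] at iy0; rw [hpy1e] at iy1; simp only [mul_one, mul_zero, add_zero] at *
        omega
      subst ha hbb
      simp only [Prod.mk.injEq]
      constructor <;> ring
    · right; right; right
      intro p
      rw [show p = (p.1, p.2) from rfl, hform p.1 p.2]
      have ha : a = xmin + xmax := by
        rw [hpx0e] at ix0; rw [hpx1e] at ix1
        simp only [mul_one, mul_zero, add_zero, mul_neg_one] at *
        omega
      have hbb : b = ymin + ymax := by
        rw [hpy0e] at iy0; rw [hpy1e] at iy1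
        simp only [mul_one, mul_zero, add_zero, mul_neg_one] at *
        omega
      subst ha hbb
      simp only [Prod.mk.injEq]
      constructor <;> ring
  · -- swap case : contradiction
    exfalso
    subst h1 h4
    have hf2 : f2 = 1 ∨ f2 = -1 := by omega
    have hg1 : g1 = 1 ∨ g1 = -1 := by omega
    have ix0 := himg px0 hpx0
    have ix1 := himg px1 hpx1
    have iy0 := himg py0 hpy0
    have iy1 := himg py1 hpy1
    rw [hpx0e] at ix0; rw [hpx1e] at ix1; rw [hpy0e] at iy0; rw [hpy1e] at iy1
    have bx0 := hb px0 hpx0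
    have bx1 := hb px1 hpx1
    have by0 := hb py0 hpy0
    have by1 := hb py1 hpy1
    rcases hf2 with rfl | rfl <;> rcases hg1 with rfl | rfl <;>
      simp only [mul_one, mul_zero, add_zero, zero_add, mul_neg_one] at ix0 ix1 iy0 iy1 <;>
      omega
end

section
/- Let n > m > 1 and let S ⊆ R = {0,…,n−1} × {0,…,m−1} be a set whose bounding box is exactly R (S meets all four sides of R). Suppose S is asymmetric, i.e., the identity is the only graph automorphism φ of the grid graph G with φ(S) = S. Then the four corner strings λ_AB(S), λ_BA(S), λ_DC(S), λ_CD(S) are pairwise distinct; in particular, exactly one of them is lexicographically greatest, so an asymmetric still configuration with non-square smallest enclosing rectangle determines a unique leading corner and hence a common global coordinate system. -/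
lemma lex_le_total {k : ℕ} (f g : Fin k → Bool) : toLex f ≤ toLex g ∨ toLex g ≤ toLex f := by
  have := (@Pi.isTrichotomous_lex (Fin k) (fun _ => Bool) (· < ·) (fun {_} x y => x < y) _
    (IsWellFounded.wf : WellFounded ((· < ·) : Fin k → Fin k → Prop))).1 f g
  rcases (or_iff_not_imp_left.mpr fun h1 => or_iff_not_imp_right.mpr fun h2 => this h1 h2 : _ ∨ _ ∨ _) with h|h|h
  · exact Or.inl (le_of_lt (α := Lex (Fin k → Bool)) h)
  · exact Or.inl (le_of_eq (congrArg toLex h))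
  · exact Or.inr (le_of_lt (α := Lex (Fin k → Bool)) h)

lemma list_max {k : ℕ} : ∀ (l : List (Fin k → Bool)), l ≠ [] →
    ∃ f ∈ l, ∀ g ∈ l, toLex g ≤ toLex f := by
  intro l
  induction l with
  | nil => simp
  | cons a t ih =>
    intro _
    rcases eq_or_ne t [] with rfl | ht
    · exact ⟨a, by simp, by simp⟩
    · obtain ⟨f, hfm, hf⟩ := ih ht
      rcases lex_le_total a f with h|h
      · refine ⟨f, List.mem_cons_of_mem _ hfm, ?_⟩
        intro g hg
        rcases List.mem_cons.mp hg with rfl|hg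
        · exact h
        · exact hf g hg
      · refine ⟨a, List.mem_cons_self, ?_⟩
        intro g hg
        rcases List.mem_cons.mp hg with rfl|hg
        · exact le_refl _
        · exact (hf g hg).trans h

lemma mem_Rset {n m : ℕ} {p : ℤ × ℤ} :
    p ∈ Rset n m ↔ 0 ≤ p.1 ∧ p.1 ≤ (n:ℤ)-1 ∧ 0 ≤ p.2 ∧ p.2 ≤ (m:ℤ)-1 := by
  obtain ⟨x, y⟩ := p
  simp [Rset, Finset.mem_product, Finset.mem_Icc, and_assoc]

def flipX (a : ℤ) : gridGraph ≃g gridGraph where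
  toFun p := (a - p.1, p.2)
  invFun p := (a - p.1, p.2)
  left_inv p := by obtain ⟨x, y⟩ := p; simp
  right_inv p := by obtain ⟨x, y⟩ := p; simp
  map_rel_iff' := by
    intro u v
    show |a - u.1 - (a - v.1)| + |u.2 - v.2| = 1 ↔ |u.1 - v.1| + |u.2 - v.2| = 1
    rw [show a - u.1 - (a - v.1) = -(u.1 - v.1) by ring, abs_neg]

def flipY (b : ℤ) : gridGraph ≃g gridGraph where
  toFun p := (p.1, b - p.2)
  invFun p := (p.1, b - p.2)
  left_inv p := by obtain ⟨x, y⟩ := p; simp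
  right_inv p := by obtain ⟨x, y⟩ := p; simp
  map_rel_iff' := by
    intro u v
    show |u.1 - v.1| + |b - u.2 - (b - v.2)| = 1 ↔ |u.1 - v.1| + |u.2 - v.2| = 1
    rw [show b - u.2 - (b - v.2) = -(u.2 - v.2) by ring, abs_neg]

def flipXY (a b : ℤ) : gridGraph ≃g gridGraph where
  toFun p := (a - p.1, b - p.2)
  invFun p := (a - p.1, b - p.2)
  left_inv p := by obtain ⟨x, y⟩ := p; simp
  right_inv p := by obtain ⟨x, y⟩ := p; simp
  map_rel_iff' := by
    intro u v
    show |a - u.1 - (a - v.1)| + |b - u.2 - (b - v.2)| = 1 ↔ |u.1 - v.1| + |u.2 - v.2| = 1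
    rw [show a - u.1 - (a - v.1) = -(u.1 - v.1) by ring,
      show b - u.2 - (b - v.2) = -(u.2 - v.2) by ring, abs_neg, abs_neg]

lemma no_sym (S : Finset (ℤ × ℤ)) (φ : gridGraph ≃g gridGraph)
    (hinv : ∀ p, φ (φ p) = p) (hmem : ∀ p, p ∈ S ↔ φ p ∈ S)
    (hasym : ∀ ψ : gridGraph ≃g gridGraph,
      ⇑ψ '' (S : Set (ℤ × ℤ)) = (S : Set (ℤ × ℤ)) → ∀ p : ℤ × ℤ, ψ p = p)
    (p0 : ℤ × ℤ) (hne : φ p0 ≠ p0) : False := by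
  have himg : ⇑φ '' (S : Set (ℤ × ℤ)) = (S : Set (ℤ × ℤ)) := by
    ext q
    simp only [Set.mem_image, Finset.mem_coe]
    constructor
    · rintro ⟨p, hp, rfl⟩
      exact (hmem p).mp hp
    · intro hq
      exact ⟨φ q, (hmem (φ q)).mpr (by rwa [hinv]), hinv q⟩
  exact hne (hasym φ himg p0)

lemma string_key {n m : ℕ} (hn : 0 < n) {F G : ℕ → ℕ → Bool}
    (h : (fun i : Fin (m*n) => F ((i:ℕ) % n) ((i:ℕ)/n))
       = (fun i : Fin (m*n) => G ((i:ℕ) % n) ((i:ℕ)/n)))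
    {x y : ℕ} (hx : x < n) (hy : y < m) : F x y = G x y := by
  have hi : y * n + x < m * n := by
    calc y*n + x < y*n + n := by omega
    _ = (y+1)*n := by ring
    _ ≤ m*n := Nat.mul_le_mul_right _ hy
  have hmod : (y*n+x) % n = x := by
    rw [show y*n+x = n*y + x by ring, Nat.mul_add_mod, Nat.mod_eq_of_lt hx]
  have hdiv : (y*n+x) / n = y := by
    rw [show y*n+x = n*y + x by ring, Nat.mul_add_div hn, Nat.div_eq_of_lt hx, add_zero]
  have h2 := congrFun h ⟨y*n+x, hi⟩
  simpa only [Fin.val_mk, hmod, hdiv] using h2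

section main
variable {n m : ℕ} {S : Finset (ℤ × ℤ)}

lemma noX (hn : 1 < n) (hS : S ⊆ Rset n m)
    (cond : ∀ a b : ℤ, 0 ≤ a → a ≤ (n:ℤ)-1 → 0 ≤ b → b ≤ (m:ℤ)-1 →
      ((a, b) ∈ S ↔ ((n:ℤ)-1-a, b) ∈ S))
    (hasym : ∀ ψ : gridGraph ≃g gridGraph,
      ⇑ψ '' (S : Set (ℤ × ℤ)) = (S : Set (ℤ × ℤ)) → ∀ p : ℤ × ℤ, ψ p = p) : False := by
  refine no_sym S (flipX ((n:ℤ)-1)) (fun p => by obtain ⟨x,y⟩ := p; simp [flipX]) ?_ hasym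
    (0, 0) (by simp [flipX, Prod.ext_iff]; omega)
  intro p
  by_cases hp : p ∈ Rset n m
  · obtain ⟨x, y⟩ := p
    rw [mem_Rset] at hp
    exact cond x y hp.1 hp.2.1 hp.2.2.1 hp.2.2.2
  · constructor
    · intro h; exact absurd (hS h) hp
    · intro h
      have := mem_Rset.mp (hS h)
      exact absurd (mem_Rset.mpr (by obtain ⟨x,y⟩ := p; simp [flipX] at this ⊢; omega)) hp

lemma noY (hm : 1 < m) (hS : S ⊆ Rset n m)
    (cond : ∀ a b : ℤ, 0 ≤ a → a ≤ (n:ℤ)-1 → 0 ≤ b → b ≤ (m:ℤ)-1 →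
      ((a, b) ∈ S ↔ (a, (m:ℤ)-1-b) ∈ S))
    (hasym : ∀ ψ : gridGraph ≃g gridGraph,
      ⇑ψ '' (S : Set (ℤ × ℤ)) = (S : Set (ℤ × ℤ)) → ∀ p : ℤ × ℤ, ψ p = p) : False := by
  refine no_sym S (flipY ((m:ℤ)-1)) (fun p => by obtain ⟨x,y⟩ := p; simp [flipY]) ?_ hasym
    (0, 0) (by simp [flipY, Prod.ext_iff]; omega)
  intro p
  by_cases hp : p ∈ Rset n m
  · obtain ⟨x, y⟩ := p
    rw [mem_Rset] at hp
    exact cond x y hp.1 hp.2.1 hp.2.2.1 hp.2.2.2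
  · constructor
    · intro h; exact absurd (hS h) hp
    · intro h
      have := mem_Rset.mp (hS h)
      exact absurd (mem_Rset.mpr (by obtain ⟨x,y⟩ := p; simp [flipY] at this ⊢; omega)) hp

lemma noXY (hn : 1 < n) (hS : S ⊆ Rset n m)
    (cond : ∀ a b : ℤ, 0 ≤ a → a ≤ (n:ℤ)-1 → 0 ≤ b → b ≤ (m:ℤ)-1 →
      ((a, b) ∈ S ↔ ((n:ℤ)-1-a, (m:ℤ)-1-b) ∈ S))
    (hasym : ∀ ψ : gridGraph ≃g gridGraph,
      ⇑ψ '' (S : Set (ℤ × ℤ)) = (S : Set (ℤ × ℤ)) → ∀ p : ℤ × ℤ, ψ p = p) : False := by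
  refine no_sym S (flipXY ((n:ℤ)-1) ((m:ℤ)-1)) (fun p => by obtain ⟨x,y⟩ := p; simp [flipXY])
    ?_ hasym (0, 0) (by simp [flipXY, Prod.ext_iff]; omega)
  intro p
  by_cases hp : p ∈ Rset n m
  · obtain ⟨x, y⟩ := p
    rw [mem_Rset] at hp
    exact cond x y hp.1 hp.2.1 hp.2.2.1 hp.2.2.2
  · constructor
    · intro h; exact absurd (hS h) hp
    · intro h
      have := mem_Rset.mp (hS h)
      exact absurd (mem_Rset.mpr (by obtain ⟨x,y⟩ := p; simp [flipXY] at this ⊢; omega)) hp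

end main


/-- An asymmetric still configuration with non-square smallest enclosing rectangle has
four pairwise distinct corner strings; in particular exactly one of them is
lexicographically greatest, so such a configuration determines a unique leading
corner (and hence a common global coordinate system). -/
theorem asymmetric_implies_corner_strings_distinct (n m : ℕ) (hm : 1 < m) (hmn : m < n)
    (S : Finset (ℤ × ℤ)) (hS : S ⊆ Rset n m)
    (hleft : ∃ p ∈ S, p.1 = 0) (hright : ∃ p ∈ S, p.1 = (n : ℤ) - 1)
    (hbot : ∃ p ∈ S, p.2 = 0) (htop : ∃ p ∈ S, p.2 = (m : ℤ) - 1)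
    (hasym : ∀ φ : gridGraph ≃g gridGraph,
      ⇑φ '' (S : Set (ℤ × ℤ)) = (S : Set (ℤ × ℤ)) → ∀ p : ℤ × ℤ, φ p = p) :
    ([lamAB n m S, lamBA n m S, lamDC n m S, lamCD n m S].Pairwise (· ≠ ·)) ∧
    ∃! f : Fin (m * n) → Bool,
      f ∈ [lamAB n m S, lamBA n m S, lamDC n m S, lamCD n m S] ∧
      ∀ g ∈ [lamAB n m S, lamBA n m S, lamDC n m S, lamCD n m S],
        toLex g ≤ toLex f := by
  have hn : 1 < n := hm.trans hmn
  have hn0 : 0 < n := by omega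
  -- conditions derived from string equalities
  have dX := fun (cond : ∀ a b : ℤ, 0 ≤ a → a ≤ (n:ℤ)-1 → 0 ≤ b → b ≤ (m:ℤ)-1 →
      ((a, b) ∈ S ↔ ((n:ℤ)-1-a, b) ∈ S)) => noX hn hS cond hasym
  have dY := fun (cond : ∀ a b : ℤ, 0 ≤ a → a ≤ (n:ℤ)-1 → 0 ≤ b → b ≤ (m:ℤ)-1 →
      ((a, b) ∈ S ↔ (a, (m:ℤ)-1-b) ∈ S)) => noY hm hS cond hasym
  have dXY := fun (cond : ∀ a b : ℤ, 0 ≤ a → a ≤ (n:ℤ)-1 → 0 ≤ b → b ≤ (m:ℤ)-1 →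
      ((a, b) ∈ S ↔ ((n:ℤ)-1-a, (m:ℤ)-1-b) ∈ S)) => noXY hn hS cond hasym
  -- the six inequalities
  have h12 : lamAB n m S ≠ lamBA n m S := by
    intro heq
    refine dX (fun a b ha1 ha2 hb1 hb2 => ?_)
    have key := string_key (m := m) hn0
      (F := fun x y => decide (((x:ℤ), (y:ℤ)) ∈ S))
      (G := fun x y => decide ((((n - 1 - x : ℕ) : ℤ), (y:ℤ)) ∈ S)) heq
      (x := a.toNat) (y := b.toNat) (by omega) (by omega)
    have key' := decide_eq_decide.mp key
    rw [show ((a.toNat : ℕ):ℤ) = a by omega, show ((b.toNat : ℕ):ℤ) = b by omega,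
      show ((n - 1 - a.toNat : ℕ):ℤ) = (n:ℤ)-1-a by omega] at key'
    exact key'
  have h13 : lamAB n m S ≠ lamDC n m S := by
    intro heq
    refine dY (fun a b ha1 ha2 hb1 hb2 => ?_)
    have key := string_key (m := m) hn0
      (F := fun x y => decide (((x:ℤ), (y:ℤ)) ∈ S))
      (G := fun x y => decide (((x:ℤ), ((m - 1 - y : ℕ) : ℤ)) ∈ S)) heq
      (x := a.toNat) (y := b.toNat) (by omega) (by omega)
    have key' := decide_eq_decide.mp key
    rw [show ((a.toNat : ℕ):ℤ) = a by omega, show ((b.toNat : ℕ):ℤ) = b by omega,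
      show ((m - 1 - b.toNat : ℕ):ℤ) = (m:ℤ)-1-b by omega] at key'
    exact key'
  have h14 : lamAB n m S ≠ lamCD n m S := by
    intro heq
    refine dXY (fun a b ha1 ha2 hb1 hb2 => ?_)
    have key := string_key (m := m) hn0
      (F := fun x y => decide (((x:ℤ), (y:ℤ)) ∈ S))
      (G := fun x y => decide ((((n - 1 - x : ℕ):ℤ), ((m - 1 - y : ℕ) : ℤ)) ∈ S)) heq
      (x := a.toNat) (y := b.toNat) (by omega) (by omega)
    have key' := decide_eq_decide.mp key
    rw [show ((a.toNat : ℕ):ℤ) = a by omega, show ((b.toNat : ℕ):ℤ) = b by omega,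
      show ((n - 1 - a.toNat : ℕ):ℤ) = (n:ℤ)-1-a by omega,
      show ((m - 1 - b.toNat : ℕ):ℤ) = (m:ℤ)-1-b by omega] at key'
    exact key'
  have h23 : lamBA n m S ≠ lamDC n m S := by
    intro heq
    refine dXY (fun a b ha1 ha2 hb1 hb2 => ?_)
    have key := string_key (m := m) hn0
      (F := fun x y => decide ((((n - 1 - x : ℕ):ℤ), (y:ℤ)) ∈ S))
      (G := fun x y => decide (((x:ℤ), ((m - 1 - y : ℕ) : ℤ)) ∈ S)) heq
      (x := n - 1 - a.toNat) (y := b.toNat) (by omega) (by omega)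
    have key' := decide_eq_decide.mp key
    rw [show ((n - 1 - (n - 1 - a.toNat) : ℕ):ℤ) = a by omega,
      show ((b.toNat : ℕ):ℤ) = b by omega,
      show ((n - 1 - a.toNat : ℕ):ℤ) = (n:ℤ)-1-a by omega,
      show ((m - 1 - b.toNat : ℕ):ℤ) = (m:ℤ)-1-b by omega] at key'
    exact key'
  have h24 : lamBA n m S ≠ lamCD n m S := by
    intro heq
    refine dY (fun a b ha1 ha2 hb1 hb2 => ?_)
    have key := string_key (m := m) hn0
      (F := fun x y => decide ((((n - 1 - x : ℕ):ℤ), (y:ℤ)) ∈ S))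
      (G := fun x y => decide ((((n - 1 - x : ℕ):ℤ), ((m - 1 - y : ℕ) : ℤ)) ∈ S)) heq
      (x := n - 1 - a.toNat) (y := b.toNat) (by omega) (by omega)
    have key' := decide_eq_decide.mp key
    rw [show ((n - 1 - (n - 1 - a.toNat) : ℕ):ℤ) = a by omega,
      show ((b.toNat : ℕ):ℤ) = b by omega,
      show ((m - 1 - b.toNat : ℕ):ℤ) = (m:ℤ)-1-b by omega] at key'
    exact key'
  have h34 : lamDC n m S ≠ lamCD n m S := by
    intro heq
    refine dX (fun a b ha1 ha2 hb1 hb2 => ?_)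
    have key := string_key (m := m) hn0
      (F := fun x y => decide (((x:ℤ), ((m - 1 - y : ℕ):ℤ)) ∈ S))
      (G := fun x y => decide ((((n - 1 - x : ℕ):ℤ), ((m - 1 - y : ℕ) : ℤ)) ∈ S)) heq
      (x := a.toNat) (y := m - 1 - b.toNat) (by omega) (by omega)
    have key' := decide_eq_decide.mp key
    rw [show ((a.toNat : ℕ):ℤ) = a by omega,
      show ((m - 1 - (m - 1 - b.toNat) : ℕ):ℤ) = b by omega,
      show ((n - 1 - a.toNat : ℕ):ℤ) = (n:ℤ)-1-a by omega] at key'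
    exact key'
  constructor
  · refine List.Pairwise.cons ?_ (List.Pairwise.cons ?_ (List.Pairwise.cons ?_
      (List.pairwise_singleton _ _)))
    · intro g hg
      simp only [List.mem_cons, List.mem_singleton, List.not_mem_nil, or_false] at hg
      rcases hg with rfl | rfl | rfl
      exacts [h12, h13, h14]
    · intro g hg
      simp only [List.mem_cons, List.mem_singleton, List.not_mem_nil, or_false] at hg
      rcases hg with rfl | rfl
      exacts [h23, h24]
    · intro g hg
      simp only [List.mem_singleton, List.mem_cons, List.not_mem_nil, or_false] at hg
      subst hg
      exact h34
  · obtain ⟨f, hfm, hf⟩ := list_max [lamAB n m S, lamBA n m S, lamDC n m S, lamCD n m S]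
      (by simp)
    refine ⟨f, ⟨hfm, hf⟩, ?_⟩
    rintro f' ⟨hf'm, hf'⟩
    have h1 : toLex f' ≤ toLex f := hf f' hf'm
    have h2 : toLex f ≤ toLex f' := hf' f hfm
    exact toLex.injective (le_antisymm h1 h2)
end
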